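/- arXiv:2604.20396 — 7 statements merged into one kernel-verified Lean document; each statement's English description precedes it below -/
import Mathlib

section
/- There exist A₀ > 0 and C ≥ 1 such that the following holds: for every A ∈ (0, A₀] and every C² function Θ : [0,∞) → ℝ which is positive on [0,∞) and solves Θ''(r) + (5/r)Θ'(r) + (r/2)Θ'(r) + Θ(r) + Θ(r)² = 0 for r > 0 with Θ(0) = A and Θ'(0) = 0, one has C⁻¹ A (1+r)⁻² ≤ Θ(r) ≤ C A (1+r)⁻² for all r ≥ 0. Consequently, setting θ_A(x,t) = (t+1)⁻¹ Θ(|x|/√(t+1)) for x ∈ ℝ⁶ and t > 0, there exists C' ≥ 1 such that C'⁻¹ A [t⁻¹ 𝟙_{|x| ≤ √t} + |x|⁻² 𝟙_{|x| > √t}] ≤ θ_A(x,t) ≤ C' A [t⁻¹ 𝟙_{|x| ≤ √t} + |x|⁻² 𝟙_{|x| > √t}] for all x ∈ ℝ⁶ and t > 1. -/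
/-!
With `v = (4 + r²) Θ` and the integrating factor `W = r⁵ e^{r²/4} (4 + r²)⁻²`, the profile
equation takes the divergence form `(W v')' = W v (32 / (4 + r²)² - Θ)`, and `W v'` vanishes
at `r = 0`. Comparing `v` with barriers `α - β / (4 + r²)` in this form gives, by a continuity
argument, `v < 34 A - 119 A / (4 + r²)`; given `v ≤ 34 A`, the right-hand side is bounded below by
`-O(A²)`, which integrates to `v ≥ 2 A` for small `A`. So `Θ ≍ A / (4 + r²) ≍ A (1 + r)⁻²`, and
the bounds on `θ_A` follow from `(t + 1) (1 + |x| / √(t + 1))² = (√(t + 1) + |x|)²`.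
-/

noncomputable section

abbrev E6 : Type := EuclideanSpace ℝ (Fin 6)

open Set Real

def profileWeight (r : ℝ) : ℝ := r ^ 5 * exp (r ^ 2 / 4) / (4 + r ^ 2) ^ 2

lemma profileWeight_zero : profileWeight 0 = 0 := by simp [profileWeight]

lemma profileWeight_pos {r : ℝ} (hr : 0 < r) : 0 < profileWeight r := by
  unfold profileWeight; positivity

@[fun_prop]
lemma continuous_profileWeight : Continuous profileWeight :=
  Continuous.div (by fun_prop) (by fun_prop) fun r ↦ by positivity

lemma hasDerivAt_profileWeight (r : ℝ) :
    HasDerivAt profileWeight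
      (exp (r ^ 2 / 4) * r ^ 4 * (40 + 6 * r ^ 2 + r ^ 4) / (2 * (4 + r ^ 2) ^ 3)) r := by
  have hq : HasDerivAt (fun s : ℝ ↦ 4 + s ^ 2) (2 * r) r := by
    simpa using (hasDerivAt_pow 2 r).const_add 4
  have hexp : HasDerivAt (fun s : ℝ ↦ exp (s ^ 2 / 4)) (exp (r ^ 2 / 4) * (2 * r / 4)) r := by
    simpa using ((hasDerivAt_pow 2 r).div_const 4).exp
  have hnum := (hasDerivAt_pow 5 r).fun_mul hexp
  have h4 : (4 + r ^ 2) ^ 2 ≠ 0 := by positivity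
  refine (hnum.fun_div (hq.fun_pow 2) h4).congr_deriv ?_
  field_simp
  ring

lemma hasDerivAt_barrier (α β x : ℝ) :
    HasDerivAt (fun s ↦ α - β / (4 + s ^ 2)) (2 * β * x / (4 + x ^ 2) ^ 2) x := by
  have hq : HasDerivAt (fun s : ℝ ↦ 4 + s ^ 2) (2 * x) x := by
    simpa using (hasDerivAt_pow 2 x).const_add 4
  refine (((hasDerivAt_const x β).div hq (by positivity)).const_sub α).congr_deriv ?_
  ring

lemma hasDerivAt_profileWeight_mul_barrier_slope (β x : ℝ) :
    HasDerivAt (fun s ↦ profileWeight s * (2 * β * s / (4 + s ^ 2) ^ 2))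
      (β * profileWeight x * (48 + x ^ 4) / (4 + x ^ 2) ^ 3) x := by
  have hq : HasDerivAt (fun s : ℝ ↦ (4 + s ^ 2) ^ 2) (2 * (4 + x ^ 2) * (2 * x)) x := by
    simpa using ((hasDerivAt_pow 2 x).const_add 4).fun_pow 2
  have hslope := ((hasDerivAt_id x).const_mul (2 * β)).fun_div hq (by positivity)
  refine ((hasDerivAt_profileWeight x).fun_mul hslope).congr_deriv ?_
  simp only [profileWeight, id]
  field_simp
  ring

/-- `W v'` for `v = (4 + s²) Θ`; the one-sided derivative makes it continuous at `s = 0`. -/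
def profileFlux (Θ : ℝ → ℝ) (s : ℝ) : ℝ :=
  profileWeight s * (2 * s * Θ s + (4 + s ^ 2) * derivWithin Θ (Ici 0) s)

variable {Θ : ℝ → ℝ}

lemma profileFlux_zero : profileFlux Θ 0 = 0 := by simp [profileFlux, profileWeight_zero]

lemma profileFlux_of_pos {r : ℝ} (hr : 0 < r) :
    profileFlux Θ r = profileWeight r * (2 * r * Θ r + (4 + r ^ 2) * deriv Θ r) := by
  rw [profileFlux, derivWithin_of_mem_nhds (Ici_mem_nhds hr)]

lemma continuousOn_profileFlux (hΘ : ContDiffOn ℝ 1 Θ (Ici 0)) :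
    ContinuousOn (profileFlux Θ) (Ici 0) := by
  have hΘ' := hΘ.continuousOn_derivWithin (uniqueDiffOn_Ici 0) le_rfl
  unfold profileFlux
  exact continuous_profileWeight.continuousOn.mul
    ((continuousOn_const.mul continuousOn_id).mul hΘ.continuousOn |>.add
      ((continuousOn_const.add (continuousOn_id.pow 2)).mul hΘ'))

lemma hasDerivAt_profileFlux {r : ℝ} (hr : 0 < r) (h₁ : DifferentiableAt ℝ Θ r)
    (h₂ : DifferentiableAt ℝ (deriv Θ) r)
    (hODE : deriv (deriv Θ) r + (5 / r) * deriv Θ r + (r / 2) * deriv Θ r + Θ r + Θ r ^ 2 = 0) :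
    HasDerivAt (profileFlux Θ)
      (profileWeight r * ((4 + r ^ 2) * Θ r) * (32 / (4 + r ^ 2) ^ 2 - Θ r)) r := by
  have hq : HasDerivAt (fun s : ℝ ↦ 4 + s ^ 2) (2 * r) r := by
    simpa using (hasDerivAt_pow 2 r).const_add 4
  have hv' := (((hasDerivAt_id r).const_mul 2).fun_mul h₁.hasDerivAt).fun_add
    (hq.fun_mul h₂.hasDerivAt)
  have hF := (hasDerivAt_profileWeight r).fun_mul hv'
  have hFeq : profileFlux Θ =ᶠ[nhds r]
      fun s ↦ profileWeight s * (2 * id s * Θ s + (4 + s ^ 2) * deriv Θ s) := by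
    filter_upwards [Ioi_mem_nhds hr] with s hs using profileFlux_of_pos hs
  refine (hF.congr_of_eventuallyEq hFeq).congr_deriv ?_
  rw [show deriv (deriv Θ) r = -((5 / r) * deriv Θ r) - (r / 2) * deriv Θ r - Θ r - Θ r ^ 2 by
    linarith]
  simp only [profileWeight, id]
  field_simp
  ring

lemma monotoneOn_Icc_of_hasDerivAt_nonneg {a b : ℝ} {f f' : ℝ → ℝ}
    (hf : ContinuousOn f (Icc a b)) (hf' : ∀ x ∈ Ioo a b, HasDerivAt f (f' x) x)
    (hf'₀ : ∀ x ∈ Ioo a b, 0 ≤ f' x) : MonotoneOn f (Icc a b) := by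
  refine monotoneOn_of_hasDerivWithinAt_nonneg (f' := f') (convex_Icc a b) hf ?_ ?_ <;>
    rw [interior_Icc]
  exacts [fun x hx ↦ (hf' x hx).hasDerivWithinAt, hf'₀]

lemma monotoneOn_of_flux_nonneg {a b : ℝ} {u u' w G g : ℝ → ℝ}
    (hu : ContinuousOn u (Icc a b)) (hu' : ∀ x ∈ Ioo a b, HasDerivAt u (u' x) x)
    (hw : ∀ x ∈ Ioo a b, 0 < w x) (hGu : ∀ x ∈ Ioo a b, G x = w x * u' x)
    (hG : ContinuousOn G (Icc a b)) (hGa : 0 ≤ G a)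
    (hG' : ∀ x ∈ Ioo a b, HasDerivAt G (g x) x) (hg : ∀ x ∈ Ioo a b, 0 ≤ g x) :
    MonotoneOn u (Icc a b) := by
  have hGmono := monotoneOn_Icc_of_hasDerivAt_nonneg hG hG' hg
  refine monotoneOn_Icc_of_hasDerivAt_nonneg hu hu' fun x hx ↦ ?_
  have hGx : 0 ≤ w x * u' x := by
    rw [← hGu x hx]
    exact hGa.trans (hGmono (left_mem_Icc.2 (hx.1.trans hx.2).le) (Ioo_subset_Icc_self hx) hx.1.le)
  exact nonneg_of_mul_nonneg_right (by linarith) (hw x hx)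

lemma pos_of_forall_Ico_pos {h : ℝ → ℝ} {a r : ℝ} (hc : ContinuousOn h (Ici a)) (ha : 0 < h a)
    (hstep : ∀ b > a, (∀ s ∈ Ico a b, 0 < h s) → 0 < h b) (hr : a ≤ r) : 0 < h r := by
  by_contra! hhr
  set S := Ici a ∩ h ⁻¹' Iic 0
  have hS : IsClosed S := hc.preimage_isClosed_of_isClosed isClosed_Ici isClosed_Iic
  have hSbdd : BddBelow S := ⟨a, fun s hs ↦ hs.1⟩
  have hbS : sInf S ∈ S := hS.csInf_mem ⟨r, hr, hhr⟩ hSbdd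
  have hab : a < sInf S := lt_of_le_of_ne hbS.1 fun h ↦ by
    have := hbS.2; simp only [← h, mem_preimage, mem_Iic] at this; linarith
  refine absurd (hstep _ hab fun s hs ↦ ?_) (not_lt.2 hbS.2)
  by_contra! hsS
  exact absurd (csInf_le hSbdd ⟨hs.1, hsS⟩) (not_le.2 hs.2)

lemma differentiableAt_and_deriv_of_contDiffOn_Ici {r : ℝ} (hΘ : ContDiffOn ℝ 2 Θ (Ici 0))
    (hr : 0 < r) : DifferentiableAt ℝ Θ r ∧ DifferentiableAt ℝ (deriv Θ) r := by
  have hΘr : ContDiffAt ℝ 2 Θ r := hΘ.contDiffAt (Ici_mem_nhds hr)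
  exact ⟨hΘr.differentiableAt (by norm_num),
    (hΘr.derivWithin (m := 1) (by norm_num)).differentiableAt (by norm_num)⟩

/-- `β (48 + s⁴) / (4 + s²)³` is `(W b')' / W` for the barrier `b = α - β / (4 + s²)`. -/
lemma monotoneOn_profile_comparison (hΘ : ContDiffOn ℝ 2 Θ (Ici 0))
    (hODE : ∀ r > (0:ℝ), deriv (deriv Θ) r + (5 / r) * deriv Θ r + (r / 2) * deriv Θ r
      + Θ r + Θ r ^ 2 = 0)
    (σ α β : ℝ) {b : ℝ}
    (hrate : ∀ x ∈ Ioo 0 b, 0 ≤ σ * ((4 + x ^ 2) * Θ x * (32 / (4 + x ^ 2) ^ 2 - Θ x))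
      + β * (48 + x ^ 4) / (4 + x ^ 2) ^ 3) :
    MonotoneOn (fun s ↦ σ * ((4 + s ^ 2) * Θ s) + (α - β / (4 + s ^ 2))) (Icc 0 b) := by
  have hΘc : ContinuousOn Θ (Icc 0 b) := hΘ.continuousOn.mono Icc_subset_Ici_self
  have hdiff := fun x (hx : x ∈ Ioo 0 b) ↦ differentiableAt_and_deriv_of_contDiffOn_Ici hΘ hx.1
  refine monotoneOn_of_flux_nonneg (w := profileWeight)
    (u' := fun x ↦ σ * (2 * x * Θ x + (4 + x ^ 2) * deriv Θ x) + 2 * β * x / (4 + x ^ 2) ^ 2)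
    (G := fun s ↦ σ * profileFlux Θ s + profileWeight s * (2 * β * s / (4 + s ^ 2) ^ 2))
    (g := fun x ↦ σ * (profileWeight x * ((4 + x ^ 2) * Θ x) * (32 / (4 + x ^ 2) ^ 2 - Θ x))
      + β * profileWeight x * (48 + x ^ 4) / (4 + x ^ 2) ^ 3)
    ?_ (fun x hx ↦ ?_) (fun x hx ↦ profileWeight_pos hx.1) (fun x hx ↦ ?_) ?_ ?_
    (fun x hx ↦ ((hasDerivAt_profileFlux hx.1 (hdiff x hx).1 (hdiff x hx).2
      (hODE x hx.1)).const_mul σ).add (hasDerivAt_profileWeight_mul_barrier_slope β x))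
    (fun x hx ↦ ?_)
  · fun_prop (disch := intros; positivity)
  · have hq : HasDerivAt (fun s : ℝ ↦ 4 + s ^ 2) (2 * x) x := by
      simpa using (hasDerivAt_pow 2 x).const_add 4
    exact ((hq.fun_mul (hdiff x hx).1.hasDerivAt).const_mul σ).fun_add (hasDerivAt_barrier α β x)
  · simp only [profileFlux_of_pos hx.1]
    ring
  · have hF : ContinuousOn (profileFlux Θ) (Icc 0 b) :=
      (continuousOn_profileFlux (hΘ.of_le (by norm_num))).mono Icc_subset_Ici_self
    fun_prop (disch := intros; positivity)
  · simp [profileFlux_zero, profileWeight_zero]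
  · refine le_of_le_of_eq (mul_nonneg (profileWeight_pos hx.1).le (hrate x hx)) ?_
    ring

lemma rate_le_of_le_upper_barrier {A x θ : ℝ} (hA : 0 ≤ A)
    (hv : (4 + x ^ 2) * θ ≤ 34 * A - 119 * A / (4 + x ^ 2)) :
    (4 + x ^ 2) * θ * (32 / (4 + x ^ 2) ^ 2 - θ) ≤ 119 * A * (48 + x ^ 4) / (4 + x ^ 2) ^ 3 := by
  have hu : 0 < 4 + x ^ 2 := by positivity
  have hv' : (4 + x ^ 2) ^ 2 * θ ≤ 34 * A * (4 + x ^ 2) - 119 * A := by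
    have := mul_le_mul_of_nonneg_left hv hu.le
    rwa [mul_sub, mul_div_cancel₀ _ hu.ne', ← mul_assoc, ← sq, mul_comm (4 + x ^ 2)] at this
  rw [← sub_nonneg, show 119 * A * (48 + x ^ 4) / (4 + x ^ 2) ^ 3
      - (4 + x ^ 2) * θ * (32 / (4 + x ^ 2) ^ 2 - θ)
      = (119 * A * (48 + x ^ 4) - 32 * ((4 + x ^ 2) ^ 2 * θ) + ((4 + x ^ 2) ^ 2 * θ) ^ 2)
        / (4 + x ^ 2) ^ 3 by field_simp; ring]
  have hquad : 0 ≤ 119 * x ^ 4 - 1088 * x ^ 2 + 5168 := by nlinarith [sq_nonneg (119 * x ^ 2 - 544)]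
  exact div_nonneg (by nlinarith [mul_nonneg hA hquad, sq_nonneg ((4 + x ^ 2) ^ 2 * θ)])
    (by positivity)

lemma neg_barrier_rate_le_rate {M x θ : ℝ} (hθ : 0 ≤ θ) (hv : (4 + x ^ 2) * θ ≤ M) :
    -(3 / 2 * M ^ 2 * (48 + x ^ 4) / (4 + x ^ 2) ^ 3)
      ≤ (4 + x ^ 2) * θ * (32 / (4 + x ^ 2) ^ 2 - θ) := by
  have hu : 0 < 4 + x ^ 2 := by positivity
  have hv0 : 0 ≤ (4 + x ^ 2) * θ := by positivity
  rw [← sub_nonpos, show -(3 / 2 * M ^ 2 * (48 + x ^ 4) / (4 + x ^ 2) ^ 3)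
      - (4 + x ^ 2) * θ * (32 / (4 + x ^ 2) ^ 2 - θ)
      = -(3 / 2 * M ^ 2 * (48 + x ^ 4) - (4 + x ^ 2) ^ 2 * ((4 + x ^ 2) * θ) ^ 2
          + 32 * (4 + x ^ 2) * ((4 + x ^ 2) * θ)) / (4 + x ^ 2) ^ 3 by field_simp; ring]
  have hquad : (4 + x ^ 2) ^ 2 ≤ 3 / 2 * (48 + x ^ 4) := by nlinarith [sq_nonneg (x ^ 2 - 8)]
  have hsq : ((4 + x ^ 2) * θ) ^ 2 ≤ M ^ 2 := pow_le_pow_left₀ hv0 hv 2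
  refine div_nonpos_of_nonpos_of_nonneg (neg_nonpos.2 ?_) (by positivity)
  nlinarith [mul_le_mul hquad hsq (sq_nonneg _) (by positivity), mul_nonneg hu.le hv0]

variable {A : ℝ}

/-- The barrier exceeds `v 0 = 4 A` by `A / 4`, and its constants make the quadratic
`119 x⁴ - 1088 x² + 5168` of `rate_le_of_le_upper_barrier` positive. -/
theorem weightedProfile_lt_upper_barrier (hΘ : ContDiffOn ℝ 2 Θ (Ici 0))
    (hODE : ∀ r > (0:ℝ), deriv (deriv Θ) r + (5 / r) * deriv Θ r + (r / 2) * deriv Θ r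
      + Θ r + Θ r ^ 2 = 0)
    (hA : 0 < A) (h0 : Θ 0 = A) {r : ℝ} (hr : 0 ≤ r) :
    (4 + r ^ 2) * Θ r < 34 * A - 119 * A / (4 + r ^ 2) := by
  set gap := fun s ↦ -1 * ((4 + s ^ 2) * Θ s) + (34 * A - 119 * A / (4 + s ^ 2))
  have hgap0 : gap 0 = A / 4 := by simp only [gap, h0]; ring
  suffices 0 < gap r by simp only [gap] at this; linarith
  have hΘc := hΘ.continuousOn
  refine pos_of_forall_Ico_pos (by simp only [gap]; fun_prop (disch := intros; positivity))
    (by linarith) (fun b hb hgap ↦ ?_) hr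
  have hmono := monotoneOn_profile_comparison hΘ hODE (-1) (34 * A) (119 * A) (b := b)
    fun x hx ↦ by
      have := rate_le_of_le_upper_barrier hA.le (x := x) (θ := Θ x)
        (by have := hgap x ⟨hx.1.le, hx.2⟩; simp only [gap] at this; linarith)
      linarith
  have := hmono (left_mem_Icc.2 hb.le) (right_mem_Icc.2 hb.le) hb.le
  linarith

theorem weightedProfile_le (hΘ : ContDiffOn ℝ 2 Θ (Ici 0))
    (hODE : ∀ r > (0:ℝ), deriv (deriv Θ) r + (5 / r) * deriv Θ r + (r / 2) * deriv Θ r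
      + Θ r + Θ r ^ 2 = 0)
    (hA : 0 < A) (h0 : Θ 0 = A) {r : ℝ} (hr : 0 ≤ r) : (4 + r ^ 2) * Θ r ≤ 34 * A := by
  have := weightedProfile_lt_upper_barrier hΘ hODE hA h0 hr
  have : 0 ≤ 119 * A / (4 + r ^ 2) := by positivity
  linarith

/-- The loss in the lower bound is quadratic in `A`, hence at most `2 A` once `A ≤ 1/250`. -/
theorem two_mul_le_weightedProfile (hΘ : ContDiffOn ℝ 2 Θ (Ici 0))
    (hODE : ∀ r > (0:ℝ), deriv (deriv Θ) r + (5 / r) * deriv Θ r + (r / 2) * deriv Θ r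
      + Θ r + Θ r ^ 2 = 0)
    (hnonneg : ∀ r ≥ (0:ℝ), 0 ≤ Θ r) (hA : 0 < A) (hA₀ : A ≤ 1 / 250) (h0 : Θ 0 = A)
    {r : ℝ} (hr : 0 ≤ r) : 2 * A ≤ (4 + r ^ 2) * Θ r := by
  have hmono := monotoneOn_profile_comparison hΘ hODE 1 (3 / 8 * (34 * A) ^ 2)
    (3 / 2 * (34 * A) ^ 2) (b := r) fun x hx ↦ by
      linarith [neg_barrier_rate_le_rate (hnonneg x hx.1.le)
        (weightedProfile_le hΘ hODE hA h0 hx.1.le)]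
  have := hmono (left_mem_Icc.2 hr) (right_mem_Icc.2 hr) hr
  have : 0 ≤ 3 / 2 * (34 * A) ^ 2 / (4 + r ^ 2) := by positivity
  simp only [h0] at *
  nlinarith

lemma profile_two_sided_of_weighted {A r θ : ℝ} (hA : 0 ≤ A) (hr : 0 ≤ r)
    (hlo : 2 * A ≤ (4 + r ^ 2) * θ) (hhi : (4 + r ^ 2) * θ ≤ 34 * A) :
    68⁻¹ * A * ((1 + r) ^ 2)⁻¹ ≤ θ ∧ θ ≤ 68 * A * ((1 + r) ^ 2)⁻¹ := by
  have h4 : 0 < 4 + r ^ 2 := by positivity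
  have h1 : 0 < (1 + r) ^ 2 := by positivity
  constructor
  · calc 68⁻¹ * A * ((1 + r) ^ 2)⁻¹ ≤ 2 * A / (4 + r ^ 2) := by
          rw [← div_eq_mul_inv, div_le_div_iff₀ h1 h4]; nlinarith
      _ ≤ θ := by rwa [div_le_iff₀' h4]
  · calc θ ≤ 34 * A / (4 + r ^ 2) := by rwa [le_div_iff₀' h4]
      _ ≤ 68 * A * ((1 + r) ^ 2)⁻¹ := by
          rw [← div_eq_mul_inv, div_le_div_iff₀ h4 h1]; nlinarith [sq_nonneg (r - 1)]

def selfSimilarEnvelope (t ξ : ℝ) : ℝ :=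
  (if ξ ≤ √t then t⁻¹ else 0) + (if √t < ξ then (ξ ^ 2)⁻¹ else 0)

lemma selfSimilarEnvelope_bounds {t ξ : ℝ} (ht : 1 ≤ t) (hξ : 0 ≤ ξ) :
    selfSimilarEnvelope t ξ / 8 ≤ ((√(t + 1) + ξ) ^ 2)⁻¹ ∧
      ((√(t + 1) + ξ) ^ 2)⁻¹ ≤ selfSimilarEnvelope t ξ := by
  have hsq : √(t + 1) ^ 2 = t + 1 := sq_sqrt (by linarith)
  have hsq_le : (√(t + 1) + ξ) ^ 2 ≤ 2 * (t + 1) + 2 * ξ ^ 2 := by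
    nlinarith [sq_nonneg (√(t + 1) - ξ)]
  have hs0 := sqrt_nonneg (t + 1)
  unfold selfSimilarEnvelope
  split_ifs with hle hlt hlt
  · exact absurd hlt (not_lt.2 hle)
  · have hξt : ξ ^ 2 ≤ t := by
      calc ξ ^ 2 ≤ √t ^ 2 := pow_le_pow_left₀ hξ hle 2
        _ = t := sq_sqrt (by linarith)
    rw [add_zero, div_eq_mul_inv, ← mul_inv]
    exact ⟨inv_anti₀ (by positivity) (by nlinarith), inv_anti₀ (by positivity) (by nlinarith)⟩
  · have hξt : t < ξ ^ 2 := by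
      calc t = √t ^ 2 := (sq_sqrt (by linarith)).symm
        _ < ξ ^ 2 := pow_lt_pow_left₀ hlt (sqrt_nonneg t) two_ne_zero
    rw [zero_add, div_eq_mul_inv, ← mul_inv]
    exact ⟨inv_anti₀ (by positivity) (by nlinarith), inv_anti₀ (by nlinarith) (by nlinarith)⟩
  · exact absurd (not_le.1 hle) hlt

lemma inv_mul_inv_one_add_div_sqrt_sq {t ξ : ℝ} (ht : 0 < t + 1) :
    (t + 1)⁻¹ * ((1 + ξ / √(t + 1)) ^ 2)⁻¹ = ((√(t + 1) + ξ) ^ 2)⁻¹ := by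
  have hs : 0 < √(t + 1) := sqrt_pos.2 ht
  rw [← mul_inv, ← sq_sqrt ht.le, ← mul_pow, sqrt_sq hs.le, mul_add, mul_one,
    mul_div_cancel₀ _ hs.ne']

lemma selfSimilar_two_sided_of_profile_two_sided {c t ξ : ℝ} (hA : 0 ≤ A) (hc : 0 < c)
    (hΘ : ∀ r ≥ (0:ℝ), c⁻¹ * A * ((1 + r) ^ 2)⁻¹ ≤ Θ r ∧ Θ r ≤ c * A * ((1 + r) ^ 2)⁻¹)
    (ht : 1 ≤ t) (hξ : 0 ≤ ξ) :
    (8 * c)⁻¹ * A * selfSimilarEnvelope t ξ ≤ (t + 1)⁻¹ * Θ (ξ / √(t + 1)) ∧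
      (t + 1)⁻¹ * Θ (ξ / √(t + 1)) ≤ 8 * c * A * selfSimilarEnvelope t ξ := by
  have ht1 : 0 < t + 1 := by linarith
  obtain ⟨hlo, hhi⟩ := hΘ _ (div_nonneg hξ (sqrt_nonneg _))
  obtain ⟨henv_lo, henv_hi⟩ := selfSimilarEnvelope_bounds ht hξ
  have hscale := inv_mul_inv_one_add_div_sqrt_sq (ξ := ξ) ht1
  have henv : 0 ≤ selfSimilarEnvelope t ξ := (inv_nonneg.2 (sq_nonneg _)).trans henv_hi
  constructor
  · calc (8 * c)⁻¹ * A * selfSimilarEnvelope t ξ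
          = c⁻¹ * A * (selfSimilarEnvelope t ξ / 8) := by ring
      _ ≤ c⁻¹ * A * ((√(t + 1) + ξ) ^ 2)⁻¹ := by gcongr
      _ = (t + 1)⁻¹ * (c⁻¹ * A * ((1 + ξ / √(t + 1)) ^ 2)⁻¹) := by rw [← hscale]; ring
      _ ≤ (t + 1)⁻¹ * Θ (ξ / √(t + 1)) := by gcongr
  · calc (t + 1)⁻¹ * Θ (ξ / √(t + 1))
          ≤ (t + 1)⁻¹ * (c * A * ((1 + ξ / √(t + 1)) ^ 2)⁻¹) := by gcongr
      _ = c * A * ((√(t + 1) + ξ) ^ 2)⁻¹ := by rw [← hscale]; ring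
      _ ≤ c * A * selfSimilarEnvelope t ξ := by gcongr
      _ ≤ 8 * c * A * selfSimilarEnvelope t ξ := by
          rw [mul_assoc 8, mul_assoc 8]
          exact le_mul_of_one_le_left (by positivity) (by norm_num)

/-- two-sided bounds `Θ(r) ∼ A (1+r)⁻²` for positive solutions of the
six-dimensional self-similar profile ODE with small initial value `A`, and consequently
two-sided bounds for the self-similar solution `θ_A(x,t) = (t+1)⁻¹ Θ(|x|/√(t+1))`. -/
theorem selfSimilar_profile_two_sided :
    ∃ A₀ > (0:ℝ), ∃ C ≥ (1:ℝ), ∃ C' ≥ (1:ℝ), ∀ A : ℝ, 0 < A → A ≤ A₀ →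
      ∀ Θ : ℝ → ℝ,
        ContDiffOn ℝ 2 Θ (Set.Ici 0) →
        (∀ r ≥ (0:ℝ), 0 < Θ r) →
        (∀ r > (0:ℝ), deriv (deriv Θ) r + (5 / r) * deriv Θ r + (r / 2) * deriv Θ r
          + Θ r + Θ r ^ 2 = 0) →
        Θ 0 = A → deriv Θ 0 = 0 →
        ((∀ r ≥ (0:ℝ), C⁻¹ * A * ((1 + r) ^ 2)⁻¹ ≤ Θ r ∧ Θ r ≤ C * A * ((1 + r) ^ 2)⁻¹) ∧
         ∀ (x : E6) (t : ℝ), 1 < t →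
           C'⁻¹ * A * ((if ‖x‖ ≤ Real.sqrt t then t⁻¹ else 0)
              + (if Real.sqrt t < ‖x‖ then (‖x‖ ^ 2)⁻¹ else 0))
             ≤ (t + 1)⁻¹ * Θ (‖x‖ / Real.sqrt (t + 1)) ∧
           (t + 1)⁻¹ * Θ (‖x‖ / Real.sqrt (t + 1))
             ≤ C' * A * ((if ‖x‖ ≤ Real.sqrt t then t⁻¹ else 0)
              + (if Real.sqrt t < ‖x‖ then (‖x‖ ^ 2)⁻¹ else 0))) := by
  refine ⟨1 / 250, by norm_num, 68, by norm_num, 8 * 68, by norm_num, ?_⟩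
  intro A hA hA₀ Θ hΘ hpos hODE h0 _
  have hprofile : ∀ r ≥ (0:ℝ), 68⁻¹ * A * ((1 + r) ^ 2)⁻¹ ≤ Θ r ∧ Θ r ≤ 68 * A * ((1 + r) ^ 2)⁻¹ :=
    fun r hr ↦ profile_two_sided_of_weighted hA.le hr
      (two_mul_le_weightedProfile hΘ hODE (fun s hs ↦ (hpos s hs).le) hA hA₀ h0 hr)
      (weightedProfile_le hΘ hODE hA h0 hr)
  exact ⟨hprofile, fun x t ht ↦ selfSimilar_two_sided_of_profile_two_sided hA.le (by norm_num)
    hprofile ht.le (norm_nonneg x)⟩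
end
end

section
/- There exist A₀ > 0 and C > 0 such that for every A ∈ (0, A₀] and every C² function Θ : [0,∞) → ℝ which is positive on [0,∞) and solves Θ''(r) + (5/r)Θ'(r) + (r/2)Θ'(r) + Θ(r) + Θ(r)² = 0 for r > 0 with Θ(0) = A, Θ'(0) = 0, and satisfies Θ(r) ≤ C₁ A (1+r)⁻² for all r ≥ 0 for some constant C₁, one has |Θ'(r)| ≤ C A for all r ≥ 0. Consequently, setting θ_A(x,t) = (t+1)⁻¹ Θ(|x|/√(t+1)), the spatial gradient satisfies |∇_x θ_A(x,t)| ≤ C A t^{−3/2} for all x ∈ ℝ⁶ and t > 1. -/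
/-!
Multiplying the ODE by the integrating factor `r⁵ e^{r²/4}` turns it into
`(r⁵ e^{r²/4} Θ')' = -r⁵ e^{r²/4} (Θ + Θ²)`. For `A` small the decay hypothesis gives
`0 < Θ + Θ² ≤ 2 C₁ A`, and comparing the flux `r⁵ e^{r²/4} Θ'` (which vanishes at `0`) with the
barrier `2 C₁ A · 4 r⁶ e^{r²/4} / (12 + r²)`, whose derivative dominates `2 C₁ A r⁵ e^{r²/4}` and
which is itself at most `2 C₁ A r⁵ e^{r²/4}`, yields `|Θ'| ≤ 2 C₁ A`. The gradient of the
self-similar solution is then controlled by the Lipschitz constant of `x ↦ Θ(|x| / √(t+1))`.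
-/

open Real Set Filter Topology

noncomputable section

namespace Convex

variable {D : Set ℝ}

theorem abs_image_sub_le_of_abs_deriv_le (hD : Convex ℝ D) {φ : ℝ → ℝ} {L : ℝ}
    (hc : ContinuousOn φ D) (hd : DifferentiableOn ℝ φ (interior D))
    (hbd : ∀ x ∈ interior D, |deriv φ x| ≤ L) {a b : ℝ} (ha : a ∈ D) (hb : b ∈ D) :
    |φ a - φ b| ≤ L * |a - b| := by
  wlog hab : a ≤ b generalizing a b
  · rw [abs_sub_comm, abs_sub_comm a]
    exact this hb ha (le_of_not_ge hab)
  have upper := hD.image_sub_le_mul_sub_of_deriv_le hc hd (fun x hx => (abs_le.mp (hbd x hx)).2)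
    a ha b hb hab
  have lower := hD.mul_sub_le_image_sub_of_le_deriv hc hd (fun x hx => (abs_le.mp (hbd x hx)).1)
    a ha b hb hab
  rw [abs_sub_comm (φ a), abs_sub_comm a, abs_of_nonneg (sub_nonneg.mpr hab), abs_le]
  constructor <;> linarith

theorem abs_le_of_abs_deriv_le_deriv (hD : Convex ℝ D) {g G : ℝ → ℝ}
    (hgc : ContinuousOn g D) (hGc : ContinuousOn G D)
    (hgd : DifferentiableOn ℝ g (interior D)) (hGd : DifferentiableOn ℝ G (interior D))
    (hbd : ∀ x ∈ interior D, |deriv g x| ≤ deriv G x) {a : ℝ} (ha : a ∈ D) (hga : |g a| ≤ G a)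
    {x : ℝ} (hx : x ∈ D) (hax : a ≤ x) : |g x| ≤ G x := by
  have hmono (s : ℝ) (hs : |s| = 1) : MonotoneOn (fun y => G y - s * g y) D := by
    refine monotoneOn_of_deriv_nonneg hD (hGc.sub (hgc.const_smul s))
      (hGd.sub (hgd.const_mul s)) fun y hy => ?_
    have hgy := hgd.differentiableAt (isOpen_interior.mem_nhds hy)
    have hGy := hGd.differentiableAt (isOpen_interior.mem_nhds hy)
    rw [deriv_fun_sub hGy (hgy.const_mul s), deriv_const_mul _ hgy, sub_nonneg]
    calc s * deriv g y ≤ |s * deriv g y| := le_abs_self _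
      _ = |deriv g y| := by rw [abs_mul, hs, one_mul]
      _ ≤ deriv G y := hbd y hy
  have h1 := hmono 1 abs_one ha hx hax
  have h2 := hmono (-1) (by simp) ha hx hax
  simp only at h1 h2
  rw [abs_le] at hga ⊢
  constructor <;> linarith

end Convex

theorem hasDerivAt_exp_sq_div_four (r : ℝ) :
    HasDerivAt (fun s => exp (s ^ 2 / 4)) (r / 2 * exp (r ^ 2 / 4)) r := by
  convert ((hasDerivAt_pow 2 r).div_const 4).exp using 1
  push_cast; ring

section RadialProfile

variable {k : ℕ}

theorem hasDerivAt_pow_mul_exp_mul_deriv {Θ : ℝ → ℝ} {r f : ℝ} (hr : r ≠ 0)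
    (hΘ : HasDerivAt (deriv Θ) (deriv (deriv Θ) r) r)
    (hode : deriv (deriv Θ) r + (k / r) * deriv Θ r + (r / 2) * deriv Θ r + f = 0) :
    HasDerivAt (fun s => s ^ k * exp (s ^ 2 / 4) * deriv Θ s)
      (-(r ^ k * exp (r ^ 2 / 4) * f)) r := by
  refine (((hasDerivAt_pow k r).fun_mul (hasDerivAt_exp_sq_div_four r)).fun_mul hΘ).congr_deriv ?_
  have hpow : (k : ℝ) * r ^ (k - 1) = k / r * r ^ k := by
    rcases Nat.eq_zero_or_eq_succ_pred k with rfl | hk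
    · simp
    · rw [hk, pow_succ]; field_simp; simp
  rw [hpow, show f = -(deriv (deriv Θ) r + (k / r) * deriv Θ r + (r / 2) * deriv Θ r) by linarith]
  ring

def radialBarrier (k : ℕ) (r : ℝ) : ℝ :=
  4 * r ^ (k + 1) * exp (r ^ 2 / 4) / (2 * k + 2 + r ^ 2)

theorem hasDerivAt_radialBarrier (k : ℕ) (r : ℝ) :
    HasDerivAt (radialBarrier k)
      (r ^ k * exp (r ^ 2 / 4) * (2 - 8 * r ^ 2 / (2 * k + 2 + r ^ 2) ^ 2)) r := by
  have hden : (2 * k + 2 + r ^ 2 : ℝ) ≠ 0 := by positivity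
  have hnum := ((hasDerivAt_pow (k + 1) r).const_mul 4).fun_mul (hasDerivAt_exp_sq_div_four r)
  refine (hnum.div ((hasDerivAt_pow 2 r).const_add (2 * k + 2 : ℝ)) hden).congr_deriv ?_
  field_simp
  push_cast
  ring

theorem pow_mul_exp_le_deriv_radialBarrier {r : ℝ} (hr : 0 ≤ r) :
    r ^ k * exp (r ^ 2 / 4) ≤
      r ^ k * exp (r ^ 2 / 4) * (2 - 8 * r ^ 2 / (2 * k + 2 + r ^ 2) ^ 2) := by
  have hratio : 8 * r ^ 2 / (2 * k + 2 + r ^ 2) ^ 2 ≤ 1 := by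
    rw [div_le_one (by positivity)]
    nlinarith [sq_nonneg (r ^ 2 - 2), (Nat.cast_nonneg k : (0:ℝ) ≤ k), sq_nonneg r]
  nlinarith [mul_nonneg (pow_nonneg hr k) (exp_pos (r ^ 2 / 4)).le]

theorem radialBarrier_le (hk : k ≠ 0) {r : ℝ} (hr : 0 ≤ r) :
    radialBarrier k r ≤ r ^ k * exp (r ^ 2 / 4) := by
  have hk1 : (1 : ℝ) ≤ k := by exact_mod_cast Nat.one_le_iff_ne_zero.mpr hk
  rw [radialBarrier, div_le_iff₀ (by positivity), pow_succ]
  have : 4 * r ≤ 2 * k + 2 + r ^ 2 := by nlinarith [sq_nonneg (r - 2)]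
  have := mul_nonneg (pow_nonneg hr k) (exp_pos (r ^ 2 / 4)).le
  nlinarith

theorem abs_deriv_le_of_radial_profile_ode (hk : k ≠ 0) {Θ f : ℝ → ℝ} {M : ℝ}
    (hΘ : ContDiffOn ℝ 2 Θ (Ici 0))
    (hode : ∀ r > 0, deriv (deriv Θ) r + (k / r) * deriv Θ r + (r / 2) * deriv Θ r + f r = 0)
    (hf : ∀ r > 0, |f r| ≤ M) {r : ℝ} (hr : 0 < r) : |deriv Θ r| ≤ M := by
  -- The one-sided derivative is continuous up to `0`, which the comparison at `0` needs.
  set ψ := derivWithin Θ (Ici 0)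
  have hψ : ∀ s > 0, ψ =ᶠ[𝓝 s] deriv Θ := fun s hs =>
    eventually_of_mem (isOpen_Ioi.mem_nhds hs) fun t ht => derivWithin_of_mem_nhds (Ici_mem_nhds ht)
  have hΘ' : DifferentiableOn ℝ (deriv Θ) (Ioi 0) :=
    ((hΘ.mono Ioi_subset_Ici_self).deriv_of_isOpen isOpen_Ioi (m := 1) le_rfl).differentiableOn
      one_ne_zero
  set g := fun s => s ^ k * exp (s ^ 2 / 4) * ψ s
  have hg : ∀ s > 0, HasDerivAt g (-(s ^ k * exp (s ^ 2 / 4) * f s)) s := fun s hs =>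
    have hΘ's := (hΘ'.differentiableAt (isOpen_Ioi.mem_nhds hs)).hasDerivAt
    (hasDerivAt_pow_mul_exp_mul_deriv hs.ne' hΘ's (hode s hs)).congr_of_eventuallyEq
      ((hψ s hs).mono fun t ht => by simp only [g, ht])
  have hG (s : ℝ) := (hasDerivAt_radialBarrier k s).const_mul M
  have hM : 0 ≤ M := (abs_nonneg _).trans (hf r hr)
  have hcompare : |g r| ≤ M * radialBarrier k r := by
    refine (convex_Ici 0).abs_le_of_abs_deriv_le_deriv (g := g)
      (G := fun s => M * radialBarrier k s) ?_ ?_ ?_ ?_ ?_ self_mem_Ici ?_ hr.le hr.le <;>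
      try rw [interior_Ici]
    · exact (by fun_prop : Continuous fun s : ℝ => s ^ k * exp (s ^ 2 / 4)).continuousOn.mul
        (hΘ.continuousOn_derivWithin (uniqueDiffOn_Ici 0) one_le_two)
    · exact fun s _ => (hG s).continuousAt.continuousWithinAt
    · exact fun s hs => (hg s hs).differentiableAt.differentiableWithinAt
    · exact fun s _ => (hG s).differentiableAt.differentiableWithinAt
    · intro s (hs : 0 < s)
      rw [(hg s hs).deriv, (hG s).deriv, abs_neg, abs_mul,
        abs_of_pos (by positivity : 0 < s ^ k * exp (s ^ 2 / 4)), mul_comm M]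
      exact (mul_le_mul_of_nonneg_left (hf s hs) (by positivity)).trans
        (mul_le_mul_of_nonneg_right (pow_mul_exp_le_deriv_radialBarrier hs.le) hM)
    · simp [g, radialBarrier, hk]
  have hpos : 0 < r ^ k * exp (r ^ 2 / 4) := by positivity
  have hscaled : |ψ r| * (r ^ k * exp (r ^ 2 / 4)) ≤ M * (r ^ k * exp (r ^ 2 / 4)) := by
    calc |ψ r| * (r ^ k * exp (r ^ 2 / 4)) = |g r| := by
          simp only [g, abs_mul, abs_of_pos hpos]; ring
      _ ≤ _ := hcompare
      _ ≤ _ := mul_le_mul_of_nonneg_left (radialBarrier_le hk hr.le) hM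
  rw [← derivWithin_of_mem_nhds (Ici_mem_nhds hr)]
  exact le_of_mul_le_mul_right hscaled hpos

end RadialProfile

theorem norm_gradient_le_of_abs_sub_le {E : Type*} [NormedAddCommGroup E] [InnerProductSpace ℝ E]
    [CompleteSpace E] {f : E → ℝ} {C : ℝ} (hC : 0 ≤ C) (hf : ∀ y z, |f y - f z| ≤ C * ‖y - z‖)
    (x : E) : ‖gradient f x‖ ≤ C := by
  rw [gradient, LinearIsometryEquiv.norm_map]
  exact norm_fderiv_le_of_lip' ℝ hC (Eventually.of_forall fun y => hf y x)

theorem norm_gradient_selfSimilar_le {E : Type*} [NormedAddCommGroup E] [InnerProductSpace ℝ E]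
    [CompleteSpace E] {Θ : ℝ → ℝ} {L t : ℝ} (hL : 0 ≤ L) (ht : 0 < t)
    (hΘ : ∀ a ≥ 0, ∀ b ≥ 0, |Θ a - Θ b| ≤ L * |a - b|) (x : E) :
    ‖gradient (fun y : E => t⁻¹ * Θ (‖y‖ / √t)) x‖ ≤ L * t ^ (-(3 : ℝ) / 2) := by
  have hsqrt : 0 < √t := sqrt_pos.mpr ht
  have hpow : t ^ (-(3 : ℝ) / 2) = t⁻¹ * (√t)⁻¹ := by
    rw [show -(3 : ℝ) / 2 = -1 + -(1 / 2) by norm_num, rpow_add ht, rpow_neg_one, rpow_neg ht.le,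
      sqrt_eq_rpow]
  refine norm_gradient_le_of_abs_sub_le (by positivity) (fun y z => ?_) x
  calc |t⁻¹ * Θ (‖y‖ / √t) - t⁻¹ * Θ (‖z‖ / √t)|
      = t⁻¹ * |Θ (‖y‖ / √t) - Θ (‖z‖ / √t)| := by
        rw [← mul_sub, abs_mul, abs_of_pos (inv_pos.mpr ht)]
    _ ≤ t⁻¹ * (L * |‖y‖ / √t - ‖z‖ / √t|) := by
        gcongr
        exact hΘ _ (by positivity) _ (by positivity)
    _ = t⁻¹ * (L * (|‖y‖ - ‖z‖| / √t)) := by rw [div_sub_div_same, abs_div, abs_of_pos hsqrt]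
    _ ≤ t⁻¹ * (L * (‖y - z‖ / √t)) := by gcongr; exact abs_norm_sub_norm_le y z
    _ = L * t ^ (-(3 : ℝ) / 2) * ‖y - z‖ := by rw [hpow]; ring

/-- gradient bound for positive decaying solutions of the
six-dimensional self-similar profile ODE: `|Θ'(r)| ≤ C A`, and consequently
`|∇ₓ θ_A(x,t)| ≤ C A t^{−3/2}` for `t > 1`, where `θ_A(x,t) = (t+1)⁻¹ Θ(|x|/√(t+1))`. -/
theorem selfSimilar_profile_gradient_bound (C₁ : ℝ) (hC₁ : 0 < C₁) :
    ∃ A₀ > (0:ℝ), ∃ C > (0:ℝ), ∀ A : ℝ, 0 < A → A ≤ A₀ →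
      ∀ Θ : ℝ → ℝ,
        ContDiffOn ℝ 2 Θ (Set.Ici 0) →
        (∀ r ≥ (0:ℝ), 0 < Θ r) →
        (∀ r > (0:ℝ), deriv (deriv Θ) r + (5 / r) * deriv Θ r + (r / 2) * deriv Θ r
          + Θ r + Θ r ^ 2 = 0) →
        Θ 0 = A → deriv Θ 0 = 0 →
        (∀ r ≥ (0:ℝ), Θ r ≤ C₁ * A * ((1 + r) ^ 2)⁻¹) →
        ((∀ r ≥ (0:ℝ), |deriv Θ r| ≤ C * A) ∧
         ∀ (x : E6) (t : ℝ), 1 < t →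
           ‖gradient (fun x' : E6 => (t + 1)⁻¹ * Θ (‖x'‖ / Real.sqrt (t + 1))) x‖
             ≤ C * A * t ^ (-(3:ℝ) / 2)) := by
  refine ⟨C₁⁻¹, inv_pos.mpr hC₁, 2 * C₁, by positivity,
    fun A hA hAA₀ Θ hΘ hpos hode _ hΘ'0 hdecay => ?_⟩
  have hsmall : C₁ * A ≤ 1 := by
    simpa [hC₁.ne'] using mul_le_mul_of_nonneg_left hAA₀ hC₁.le
  have hforce : ∀ r > 0, |Θ r + Θ r ^ 2| ≤ 2 * C₁ * A := fun r hr => by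
    have hΘle : Θ r ≤ C₁ * A := (hdecay r hr.le).trans <| mul_le_of_le_one_right (by positivity) <|
      inv_le_one_of_one_le₀ (one_le_pow₀ (by linarith))
    have := hpos r hr.le
    rw [abs_of_pos (by positivity)]
    nlinarith
  have hderiv : ∀ r > 0, |deriv Θ r| ≤ 2 * C₁ * A := fun r hr =>
    abs_deriv_le_of_radial_profile_ode (k := 5) (by norm_num) hΘ
      (fun s hs => by push_cast; linarith [hode s hs]) hforce hr
  have hlip : ∀ a ≥ 0, ∀ b ≥ 0, |Θ a - Θ b| ≤ 2 * C₁ * A * |a - b| := fun a ha b hb =>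
    (convex_Ici 0).abs_image_sub_le_of_abs_deriv_le hΘ.continuousOn
      (by simpa using (hΘ.differentiableOn two_ne_zero).mono Ioi_subset_Ici_self)
      (by simpa using hderiv) ha hb
  refine ⟨fun r hr => ?_, fun x t ht => ?_⟩
  · rcases hr.eq_or_lt with rfl | hr
    · rw [hΘ'0, abs_zero]; positivity
    · simpa [mul_assoc] using hderiv r hr
  · calc _ ≤ 2 * C₁ * A * (t + 1) ^ (-(3:ℝ) / 2) :=
          norm_gradient_selfSimilar_le (by positivity) (by linarith) hlip x
      _ ≤ 2 * C₁ * A * t ^ (-(3:ℝ) / 2) := mul_le_mul_of_nonneg_left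
          (rpow_le_rpow_of_nonpos (by linarith) (by linarith) (by norm_num)) (by positivity)
end
end

section
/- Let U(y) = (1 + |y|²/24)⁻² on ℝ⁶. Then there exist C > 0 and r₀ > 0 such that for all r ≥ r₀: | ∫_{{y ∈ ℝ⁶ : |y| > r}} U(y)² dy − (24⁴/2) π³ r⁻² | ≤ C r⁻⁴. -/
open MeasureTheory

noncomputable section

/-- The Aubin–Talenti bubble on `ℝ⁶`: `U(y) = (1 + |y|²/24)⁻²`. -/
def Ubub (y : E6) : ℝ := ((1 + ‖y‖ ^ 2 / 24) ^ 2)⁻¹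

/-! `U²` is radial, so polar coordinates turn the tail integral into `π³ ∫_r^∞ t⁵ (1 + t²/24)⁻⁴ dt`,
`π³` being six times the volume of the unit ball of `ℝ⁶`. After the substitution `s = 1 + t²/24`
the integrand is rational with an explicit primitive, whose value at `r` is
`24⁴/(2r²) + O(r⁻⁴)`; the error is in fact at most `24⁵ r⁻⁴` for every `r > 0`. -/

open Set Filter Topology Metric Module Real

theorem setIntegral_norm_gt_fun_norm_addHaar {E F : Type*} [NormedAddCommGroup E]
    [NormedSpace ℝ E] [Nontrivial E] [FiniteDimensional ℝ E] [MeasurableSpace E] [BorelSpace E]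
    (μ : Measure E) [μ.IsAddHaarMeasure] [NormedAddCommGroup F] [NormedSpace ℝ F]
    (f : ℝ → F) {r : ℝ} (hr : 0 ≤ r) :
    ∫ x in {x : E | r < ‖x‖}, f ‖x‖ ∂μ =
      finrank ℝ E • μ.real (ball 0 1) • ∫ t in Ioi r, t ^ (finrank ℝ E - 1) • f t := by
  have hindicator : ∀ t : ℝ, t ^ (finrank ℝ E - 1) • (Ioi r).indicator f t =
      (Ioi r).indicator (fun t ↦ t ^ (finrank ℝ E - 1) • f t) t := fun t ↦ by
    by_cases ht : t ∈ Ioi r <;> simp [ht]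
  rw [← integral_indicator (measurableSet_lt measurable_const measurable_norm)]
  change ∫ x, (Ioi r).indicator f ‖x‖ ∂μ = _
  rw [integral_fun_norm_addHaar μ, funext hindicator, setIntegral_indicator measurableSet_Ioi,
    Ioi_inter_Ioi, max_eq_right hr]

theorem volume_real_ball_fin_six : volume.real (ball (0 : E6) 1) = π ^ 3 / 6 := by
  rw [measureReal_def, InnerProductSpace.volume_ball_of_dim_even (k := 3) (by simp)]
  norm_num [Nat.factorial]
  positivity

/-- `∫ t in Ioi r, t⁵ (1 + t² / a)⁻⁴` in closed form: substituting `s = 1 + t² / a` turns `t⁵ dt`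
into `(a³ / 2) (s - 1)² ds`, and `s⁻¹ - s⁻² + s⁻³ / 3` is a primitive of `-(s - 1)² / s⁴`. -/
def bubbleTail (a r : ℝ) : ℝ :=
  a ^ 3 / 2 * ((1 + r ^ 2 / a)⁻¹ - ((1 + r ^ 2 / a) ^ 2)⁻¹ + ((1 + r ^ 2 / a) ^ 3)⁻¹ / 3)

theorem hasDerivAt_neg_bubbleTail {a : ℝ} (ha : 0 < a) (t : ℝ) :
    HasDerivAt (fun t ↦ -bubbleTail a t) (t ^ 5 * (((1 + t ^ 2 / a) ^ 2)⁻¹) ^ 2) t := by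
  have hs : HasDerivAt (fun t : ℝ ↦ 1 + t ^ 2 / a) (2 * t / a) t := by
    simpa using ((hasDerivAt_pow 2 t).div_const a).const_add 1
  have hne : 1 + t ^ 2 / a ≠ 0 := by positivity
  have ha₀ : a ≠ 0 := ha.ne'
  refine ((((hs.inv hne).sub ((hs.pow 2).inv (pow_ne_zero _ hne))).add
    (((hs.pow 3).inv (pow_ne_zero _ hne)).div_const 3)).const_mul (a ^ 3 / 2)).neg.congr_deriv ?_
  simp only [Pi.pow_apply]
  norm_num
  field_simp
  ring

theorem tendsto_bubbleTail {a : ℝ} (ha : 0 < a) : Tendsto (bubbleTail a) atTop (𝓝 0) := by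
  have hs : Tendsto (fun t : ℝ ↦ 1 + t ^ 2 / a) atTop atTop :=
    tendsto_atTop_add_const_left _ _ ((tendsto_pow_atTop two_ne_zero).atTop_div_const ha)
  have := ((hs.inv_tendsto_atTop.sub ((tendsto_pow_atTop two_ne_zero).comp hs).inv_tendsto_atTop).add
    (((tendsto_pow_atTop three_ne_zero).comp hs).inv_tendsto_atTop.div_const 3)).const_mul (a ^ 3 / 2)
  unfold bubbleTail
  simpa using this

theorem integral_Ioi_pow_five_mul_bubble_sq {a r : ℝ} (ha : 0 < a) (hr : 0 ≤ r) :
    ∫ t in Ioi r, t ^ 5 * (((1 + t ^ 2 / a) ^ 2)⁻¹) ^ 2 = bubbleTail a r := by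
  rw [integral_Ioi_of_hasDerivAt_of_nonneg' (fun t _ ↦ hasDerivAt_neg_bubbleTail ha t)
    (fun t ht ↦ by have : 0 < t := hr.trans_lt ht; positivity)
    (by simpa using (tendsto_bubbleTail ha).neg)]
  ring

theorem abs_bubbleTail_sub_le {a r : ℝ} (ha : 0 < a) (hr : 0 < r) :
    |bubbleTail a r - a ^ 4 / (2 * r ^ 2)| ≤ a ^ 5 / r ^ 4 := by
  have hdiff : bubbleTail a r - a ^ 4 / (2 * r ^ 2) =
      -(a ^ 5 * (3 * a ^ 2 + 8 * a * r ^ 2 + 6 * r ^ 4) / (6 * r ^ 2 * (a + r ^ 2) ^ 3)) := by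
    unfold bubbleTail
    field_simp
    ring
  rw [hdiff, abs_neg, abs_of_nonneg (by positivity), div_le_div_iff₀ (by positivity) (by positivity)]
  have hcubic : r ^ 2 * (3 * a ^ 2 + 8 * a * r ^ 2 + 6 * r ^ 4) ≤ 6 * (a + r ^ 2) ^ 3 := by
    nlinarith [pow_pos ha 3, mul_pos (pow_pos ha 2) (pow_pos hr 2), mul_pos ha (pow_pos hr 4)]
  calc a ^ 5 * (3 * a ^ 2 + 8 * a * r ^ 2 + 6 * r ^ 4) * r ^ 4
      = a ^ 5 * r ^ 2 * (r ^ 2 * (3 * a ^ 2 + 8 * a * r ^ 2 + 6 * r ^ 4)) := by ring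
    _ ≤ a ^ 5 * r ^ 2 * (6 * (a + r ^ 2) ^ 3) := by gcongr
    _ = a ^ 5 * (6 * r ^ 2 * (a + r ^ 2) ^ 3) := by ring

theorem setIntegral_norm_gt_Ubub_sq {r : ℝ} (hr : 0 ≤ r) :
    ∫ y in {y : E6 | r < ‖y‖}, Ubub y ^ 2 = π ^ 3 * bubbleTail 24 r := by
  have hpolar := setIntegral_norm_gt_fun_norm_addHaar (volume : Measure E6)
    (fun t ↦ (((1 + t ^ 2 / 24) ^ 2)⁻¹) ^ 2) hr
  rw [finrank_euclideanSpace_fin, volume_real_ball_fin_six] at hpolar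
  refine hpolar.trans ?_
  simp only [nsmul_eq_mul, smul_eq_mul, Nat.add_one_sub_one]
  rw [integral_Ioi_pow_five_mul_bubble_sq (by norm_num) hr]
  ring

/-- the tail integral of `U²` outside the ball of radius `r` equals
`(24⁴/2) π³ r⁻²` up to an error `O(r⁻⁴)`. -/
theorem tail_integral_U_sq :
    ∃ C > 0, ∃ r₀ > 0, ∀ r ≥ r₀,
      |(∫ y in {y : E6 | r < ‖y‖}, (Ubub y) ^ 2) - (24 ^ 4 / 2) * Real.pi ^ 3 / r ^ 2|
        ≤ C / r ^ 4 := by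
  refine ⟨24 ^ 5 * π ^ 3, by positivity, 1, one_pos, fun r hr ↦ ?_⟩
  have hr₀ : 0 < r := one_pos.trans_le hr
  calc |(∫ y in {y : E6 | r < ‖y‖}, Ubub y ^ 2) - 24 ^ 4 / 2 * π ^ 3 / r ^ 2|
      = |π ^ 3 * (bubbleTail 24 r - 24 ^ 4 / (2 * r ^ 2))| := by
        rw [setIntegral_norm_gt_Ubub_sq hr₀.le]
        ring_nf
    _ = π ^ 3 * |bubbleTail 24 r - 24 ^ 4 / (2 * r ^ 2)| := by
        rw [abs_mul, abs_of_pos (by positivity)]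
    _ ≤ π ^ 3 * (24 ^ 5 / r ^ 4) := by gcongr; exact abs_bubbleTail_sub_le (by norm_num) hr₀
    _ = 24 ^ 5 * π ^ 3 / r ^ 4 := by ring
end
end

section
/- Let R ∈ C¹([0,∞)) satisfy condition (Rcond). Then for each fixed b₁ > 0 and b₂ > 0 there exists s₀ > 0 such that the map s ↦ s^{b₁} R(s)^{−b₂} is monotone increasing on [s₀, ∞). -/
/-!
With `C̄` from (Rcond), the logarithmic derivative of `s ^ b₁ * R s ^ (-b₂)` is
`b₁ / s - b₂ R'(s) / R(s) ≥ (b₁ - b₂ C̄ / log s) / s`, which is nonnegative as soon as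
`log s ≥ b₂ C̄ / b₁`.
-/

noncomputable section

/-- Condition (Rcond): `R ∈ C¹([0,∞))`, `R(t) > 0` and `R'(t) ≥ 0` for `t > 0`,
`R(t) → ∞` as `t → ∞`, and there are `C̄ > 0`, `t̲ > e` with
`R'(t)/R(t) ≤ C̄/(t log t)` for all `t ≥ t̲`. -/
structure RCond (R : ℝ → ℝ) : Prop where
  contDiffOn : ContDiffOn ℝ 1 R (Set.Ici 0)
  pos : ∀ t > (0:ℝ), 0 < R t
  deriv_nonneg : ∀ t > (0:ℝ), 0 ≤ deriv R t
  tendsto_atTop : Filter.Tendsto R Filter.atTop Filter.atTop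
  ratio : ∃ Cbar > (0:ℝ), ∃ tlow > Real.exp 1,
    ∀ t ≥ tlow, deriv R t / R t ≤ Cbar / (t * Real.log t)

open Filter Set

theorem hasDerivAt_rpow_mul_rpow_neg {f : ℝ → ℝ} {f' s a b : ℝ} (hf : HasDerivAt f f' s)
    (hs : 0 < s) (hfs : 0 < f s) :
    HasDerivAt (fun x => x ^ a * f x ^ (-b))
      (s ^ (a - 1) * f s ^ (-b - 1) * (a * f s - b * (s * f'))) s := by
  have hpow : s ^ a = s ^ (a - 1) * s := by
    rw [← Real.rpow_add_one hs.ne']; ring_nf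
  have hfpow : f s ^ (-b) = f s ^ (-b - 1) * f s := by
    rw [← Real.rpow_add_one hfs.ne']; ring_nf
  refine ((Real.hasDerivAt_rpow_const (p := a) (Or.inl hs.ne')).mul
    (hf.rpow_const (p := -b) (Or.inl hfs.ne'))).congr_deriv ?_
  rw [hpow, hfpow]
  ring

theorem monotoneOn_rpow_mul_rpow_neg {f f' : ℝ → ℝ} {s₀ a b : ℝ} (hs₀ : 0 < s₀)
    (hf : ∀ s ≥ s₀, HasDerivAt f (f' s) s) (hpos : ∀ s ≥ s₀, 0 < f s)
    (hle : ∀ s ≥ s₀, b * (s * f' s) ≤ a * f s) :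
    MonotoneOn (fun s => s ^ a * f s ^ (-b)) (Ici s₀) := by
  have hderiv : ∀ s ≥ s₀, HasDerivAt (fun x => x ^ a * f x ^ (-b))
      (s ^ (a - 1) * f s ^ (-b - 1) * (a * f s - b * (s * f' s))) s := fun s hs =>
    hasDerivAt_rpow_mul_rpow_neg (hf s hs) (hs₀.trans_le hs) (hpos s hs)
  refine monotoneOn_of_hasDerivWithinAt_nonneg (convex_Ici s₀)
    (f' := fun s => s ^ (a - 1) * f s ^ (-b - 1) * (a * f s - b * (s * f' s)))
    (fun s hs => (hderiv s hs).continuousAt.continuousWithinAt) (fun s hs => ?_) (fun s hs => ?_)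
  all_goals rw [interior_Ici] at hs
  · exact (hderiv s hs.le).hasDerivWithinAt
  · have hs' : 0 < s := hs₀.trans hs
    have := hpos s hs.le
    have := sub_nonneg.2 (hle s hs.le)
    positivity

namespace RCond

variable {R : ℝ → ℝ}

theorem hasDerivAt (hR : RCond R) {s : ℝ} (hs : 0 < s) : HasDerivAt R (deriv R s) s :=
  ((hR.contDiffOn.contDiffAt (Ici_mem_nhds hs)).differentiableAt one_ne_zero).hasDerivAt

theorem exists_mul_log_mul_deriv_le (hR : RCond R) :
    ∃ C, ∀ᶠ s in atTop, 0 < Real.log s ∧ s * Real.log s * deriv R s ≤ C * R s := by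
  obtain ⟨C, -, t₀, ht₀, hratio⟩ := hR.ratio
  refine ⟨C, eventually_atTop.2 ⟨t₀, fun s hst₀ => ?_⟩⟩
  have hlog : 0 < Real.log s :=
    Real.log_pos (Real.one_lt_exp_iff.2 one_pos |>.trans ht₀ |>.trans_le hst₀)
  have hs : 0 < s := Real.exp_pos 1 |>.trans ht₀ |>.trans_le hst₀
  have h := hratio s hst₀
  rw [div_le_div_iff₀ (hR.pos s hs) (by positivity)] at h
  exact ⟨hlog, by linarith⟩

theorem eventually_mul_deriv_le (hR : RCond R) {b₁ b₂ : ℝ} (hb₁ : 0 < b₁) (hb₂ : 0 ≤ b₂) :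
    ∀ᶠ s in atTop, b₂ * (s * deriv R s) ≤ b₁ * R s := by
  obtain ⟨C, hC⟩ := hR.exists_mul_log_mul_deriv_le
  have hlarge : ∀ᶠ s in atTop, b₂ * C / b₁ ≤ Real.log s :=
    Real.tendsto_log_atTop.eventually_ge_atTop _
  filter_upwards [hC, hlarge, eventually_gt_atTop 0] with s ⟨hlog, hderiv⟩ hlarge hs
  rw [div_le_iff₀ hb₁] at hlarge
  have hRs := hR.pos s hs
  refine le_of_mul_le_mul_right ?_ hlog
  calc b₂ * (s * deriv R s) * Real.log s = b₂ * (s * Real.log s * deriv R s) := by ring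
    _ ≤ b₂ * (C * R s) := mul_le_mul_of_nonneg_left hderiv hb₂
    _ = b₂ * C * R s := by ring
    _ ≤ Real.log s * b₁ * R s := by gcongr
    _ = b₁ * R s * Real.log s := by ring

end RCond

/-- under (Rcond), for fixed `b₁, b₂ > 0` the map
`s ↦ s^{b₁} R(s)^{−b₂}` is monotone increasing on some `[s₀, ∞)`. -/
theorem monotone_rpow_mul_R_neg (R : ℝ → ℝ) (hR : RCond R)
    (b₁ b₂ : ℝ) (hb₁ : 0 < b₁) (hb₂ : 0 < b₂) :
    ∃ s₀ > (0:ℝ), MonotoneOn (fun s : ℝ => s ^ b₁ * R s ^ (-b₂)) (Set.Ici s₀) := by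
  obtain ⟨s₁, hs₁⟩ := eventually_atTop.1 (hR.eventually_mul_deriv_le hb₁ hb₂.le)
  have hs₀ : (0 : ℝ) < max s₁ 1 := lt_max_of_lt_right one_pos
  refine ⟨max s₁ 1, hs₀, monotoneOn_rpow_mul_rpow_neg (f' := deriv R) hs₀ ?_ ?_ ?_⟩
  · exact fun s hs => hR.hasDerivAt (hs₀.trans_le hs)
  · exact fun s hs => hR.pos s (hs₀.trans_le hs)
  · exact fun s hs => hs₁ s (le_of_max_le_left hs)
end
end

section
/- Let R ∈ C¹([0,∞)) satisfy condition (Rcond). Then for each fixed b₁ > 0 and b₂ > 0 there exist C ≥ 1 and s₁ > 0 such that for all s ≥ s₁: C⁻¹ R(s) ≤ R(b₁ s) ≤ C R(s) and C⁻¹ R(s) ≤ R(s^{b₂}) ≤ C R(s). -/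
open Real Set Filter

lemma abs_log_log_mul_sub_log_log_le {b x : ℝ} (hb : 0 < b) (hx : 1 < x)
    (h : 2 * |log b| ≤ log x) : |log (log (b * x)) - log (log x)| ≤ log 2 := by
  have hlogx : 0 < log x := log_pos hx
  have hlogbx : log (b * x) = log b + log x := log_mul hb.ne' (by linarith)
  have hlower : log x / 2 ≤ log (b * x) := by linarith [neg_abs_le (log b)]
  have hupper : log (b * x) ≤ 2 * log x := by linarith [le_abs_self (log b)]
  have hlogbx_pos : 0 < log (b * x) := by linarith
  have h₁ : log (log x) ≤ log 2 + log (log (b * x)) := by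
    rw [← log_mul two_ne_zero hlogbx_pos.ne']
    exact log_le_log hlogx (by linarith)
  have h₂ : log (log (b * x)) ≤ log 2 + log (log x) := by
    rw [← log_mul two_ne_zero hlogx.ne']
    exact log_le_log hlogbx_pos hupper
  rw [abs_sub_le_iff]
  constructor <;> linarith

lemma eventually_abs_log_log_mul_sub_log_log_le {b : ℝ} (hb : 0 < b) :
    ∀ᶠ x in atTop, |log (log (b * x)) - log (log x)| ≤ log 2 := by
  filter_upwards [eventually_gt_atTop 1, tendsto_log_atTop.eventually_ge_atTop (2 * |log b|)]
    with x hx hlogx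
  exact abs_log_log_mul_sub_log_log_le hb hx hlogx

lemma eventually_log_log_rpow {b : ℝ} (hb : 0 < b) :
    ∀ᶠ x in atTop, log (log (x ^ b)) = log b + log (log x) := by
  filter_upwards [eventually_gt_atTop 1] with x hx
  rw [log_rpow (by linarith), log_mul hb.ne' (log_pos hx).ne']

lemma inv_exp_mul_le_and_le_exp_mul_of_abs_log_sub_log_le {x y K : ℝ} (hx : 0 < x)
    (hy : 0 < y) (h : |log y - log x| ≤ K) :
    (exp K)⁻¹ * x ≤ y ∧ y ≤ exp K * x := by
  rw [abs_le] at h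
  constructor
  · calc (exp K)⁻¹ * x = exp (-K + log x) := by rw [exp_add, exp_neg, exp_log hx]
      _ ≤ exp (log y) := exp_le_exp.2 (by linarith)
      _ = y := exp_log hy
  · calc y = exp (log y) := (exp_log hy).symm
      _ ≤ exp (K + log x) := exp_le_exp.2 (by linarith)
      _ = exp K * x := by rw [exp_add, exp_log hx]

namespace RCond

variable {R : ℝ → ℝ}

lemma differentiableAt (hR : RCond R) {t : ℝ} (ht : 0 < t) : DifferentiableAt ℝ R t :=
  (hR.contDiffOn.differentiableOn one_ne_zero t ht.le).differentiableAt (Ici_mem_nhds ht)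

lemma monotoneOn (hR : RCond R) : MonotoneOn R (Ioi 0) := by
  refine monotoneOn_of_deriv_nonneg (convex_Ioi 0)
    (fun t ht => (hR.differentiableAt ht).continuousAt.continuousWithinAt) ?_ ?_
  · rw [interior_Ioi]
    exact fun t ht => (hR.differentiableAt ht).differentiableWithinAt
  · rw [interior_Ioi]
    exact hR.deriv_nonneg

lemma monotoneOn_log (hR : RCond R) : MonotoneOn (fun t => log (R t)) (Ioi 0) :=
  fun _ ha _ hb hab => log_le_log (hR.pos _ ha) (hR.monotoneOn ha hb hab)

lemma monotoneOn_mul_log_log_sub_log (hR : RCond R) {c t₀ : ℝ} (ht₀ : 1 < t₀)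
    (hratio : ∀ t ≥ t₀, deriv R t / R t ≤ c / (t * log t)) :
    MonotoneOn (fun t => c * log (log t) - log (R t)) (Ici t₀) := by
  have hderiv : ∀ t ≥ t₀, HasDerivAt (fun t => c * log (log t) - log (R t))
      (c / (t * log t) - deriv R t / R t) t := by
    intro t ht
    have ht0 : 0 < t := by linarith
    have hloglog : HasDerivAt (fun t => log (log t)) (t⁻¹ / log t) t :=
      (hasDerivAt_log ht0.ne').log (log_pos (by linarith)).ne'
    have h := (hloglog.const_mul c).sub
      ((hR.differentiableAt ht0).hasDerivAt.log (hR.pos t ht0).ne')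
    rwa [show c * (t⁻¹ / log t) = c / (t * log t) by ring] at h
  refine monotoneOn_of_hasDerivWithinAt_nonneg (f' := fun t => c / (t * log t) - deriv R t / R t)
    (convex_Ici t₀) (fun t ht => (hderiv t ht).continuousAt.continuousWithinAt) ?_ ?_ <;>
    rw [interior_Ici]
  · exact fun t ht => (hderiv t ht.le).hasDerivWithinAt
  · exact fun t ht => sub_nonneg.2 (hratio t ht.le)

lemma exists_abs_log_sub_log_le (hR : RCond R) :
    ∃ c ≥ 0, ∃ t₀ > 0, ∀ a ≥ t₀, ∀ b ≥ t₀,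
      |log (R b) - log (R a)| ≤ c * |log (log b) - log (log a)| := by
  obtain ⟨c, hc, t₀, ht₀, hratio⟩ := hR.ratio
  have ht₀ : 1 < t₀ := (one_lt_exp_iff.2 one_pos).trans ht₀
  refine ⟨c, hc.le, t₀, by linarith, fun a ha b hb => ?_⟩
  wlog hab : a ≤ b generalizing a b
  · rw [abs_sub_comm, abs_sub_comm (log (log b))]
    exact this b hb a ha (le_of_not_ge hab)
  have hlogR : log (R a) ≤ log (R b) :=
    hR.monotoneOn_log (show 0 < a by linarith) (show 0 < b by linarith) hab
  have hloglog : log (log a) ≤ log (log b) :=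
    log_le_log (log_pos (by linarith)) (log_le_log (by linarith) hab)
  have hmono := hR.monotoneOn_mul_log_log_sub_log ht₀ hratio ha hb hab
  rw [abs_of_nonneg (sub_nonneg.2 hlogR), abs_of_nonneg (sub_nonneg.2 hloglog)]
  linarith

end RCond

/-- under (Rcond), for fixed `b₁, b₂ > 0` one has two-sided bounds
`C⁻¹ R(s) ≤ R(b₁ s) ≤ C R(s)` and `C⁻¹ R(s) ≤ R(s^{b₂}) ≤ C R(s)` for large `s`. -/
theorem R_slowly_varying (R : ℝ → ℝ) (hR : RCond R)
    (b₁ b₂ : ℝ) (hb₁ : 0 < b₁) (hb₂ : 0 < b₂) :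
    ∃ C ≥ (1:ℝ), ∃ s₁ > (0:ℝ), ∀ s ≥ s₁,
      C⁻¹ * R s ≤ R (b₁ * s) ∧ R (b₁ * s) ≤ C * R s ∧
      C⁻¹ * R s ≤ R (s ^ b₂) ∧ R (s ^ b₂) ≤ C * R s := by
  obtain ⟨c, hc, t₀, ht₀, hlip⟩ := hR.exists_abs_log_sub_log_le
  set K := log 2 + |log b₂|
  have hcompare : ∀ s ≥ t₀, ∀ x ≥ t₀, |log (log x) - log (log s)| ≤ K →
      (exp (c * K))⁻¹ * R s ≤ R x ∧ R x ≤ exp (c * K) * R s := fun s hs x hx hsx =>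
    inv_exp_mul_le_and_le_exp_mul_of_abs_log_sub_log_le (hR.pos s (by linarith))
      (hR.pos x (by linarith)) ((hlip s hs x hx).trans (mul_le_mul_of_nonneg_left hsx hc))
  have hlarge : ∀ᶠ s in atTop, t₀ ≤ s ∧ t₀ ≤ b₁ * s ∧ t₀ ≤ s ^ b₂ ∧
      |log (log (b₁ * s)) - log (log s)| ≤ K ∧ |log (log (s ^ b₂)) - log (log s)| ≤ K := by
    filter_upwards [eventually_ge_atTop t₀,
      (tendsto_id.const_mul_atTop hb₁).eventually_ge_atTop t₀,
      (tendsto_rpow_atTop hb₂).eventually_ge_atTop t₀,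
      eventually_abs_log_log_mul_sub_log_log_le hb₁, eventually_log_log_rpow hb₂]
      with s hs hb₁s hsb₂ hmul hpow
    refine ⟨hs, hb₁s, hsb₂, hmul.trans (le_add_of_nonneg_right (abs_nonneg _)), ?_⟩
    rw [hpow, add_sub_cancel_right]
    exact le_add_of_nonneg_left (log_nonneg one_le_two)
  obtain ⟨s₀, hs₀⟩ := eventually_atTop.1 hlarge
  refine ⟨exp (c * K), one_le_exp (by positivity), max s₀ 1, by positivity, fun s hs => ?_⟩
  obtain ⟨hs, hb₁s, hsb₂, hmul, hpow⟩ := hs₀ s (le_of_max_le_left hs)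
  exact ⟨(hcompare s hs _ hb₁s hmul).1, (hcompare s hs _ hb₁s hmul).2,
    (hcompare s hs _ hsb₂ hpow).1, (hcompare s hs _ hsb₂ hpow).2⟩
end

section
/- Let R satisfy condition (Rcond), let 0 < a₁ < a < 1, and let η be a smooth cutoff on ℝ⁶ with η = 1 on the unit ball, η = 0 outside the ball of radius 2, and 0 ≤ η ≤ 1. Then for every c ≥ 1 and C₁, C₂, C₃ > 0 there exist A₀ > 0 and t₀ > 1 such that the following holds for every A ≠ 0 with |A| ≤ A₀ and every τ > t₀. Suppose: λ : [t₀, τ] → (0,∞) satisfies c⁻¹ t^{5A/4} ≤ λ(t) ≤ c t^{5A/4}; θ : ℝ⁶ × [t₀, τ] → ℝ satisfies |θ(x,t)| ≤ C₁ |A| t⁻¹; φ : {(y,t) : |y| ≤ 2R(t), t₀ ≤ t ≤ τ} → ℝ satisfies |φ(y,t)| ≤ C₂ t^{−1+5A/2} R(t)^{7−a} (1+|y|²)^{−7/2}; and ψ : ℝ⁶ × [t₀, τ] → ℝ satisfies |ψ(x,t)| ≤ C₃ |A| t⁻¹ R(t)^{−a₁}. Define u(x,t) = λ(t)⁻² U(x/λ(t))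 η(x/√t) + θ(x,t) + λ(t)⁻² φ(x/λ(t), t) η(x/(λ(t)R(t))) + ψ(x,t). Then u(x,t) > 0 for all t ∈ [t₀, τ] and all x with |x| < λ(t)^{1/2} t^{1/4}. -/
open MeasureTheory

noncomputable section

/-- The scaling kernel `Z(y) = 2U(y) + y·∇U(y) = (2 − |y|²/12)(1 + |y|²/24)⁻³`. -/
def Zker (y : E6) : ℝ := (2 - ‖y‖ ^ 2 / 12) * ((1 + ‖y‖ ^ 2 / 24) ^ 3)⁻¹

lemma R_poly_small' (R : ℝ → ℝ) (hR : RCond R) (C₂ p : ℝ) (hC₂ : 0 < C₂) (hp : 0 < p) :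
    ∀ᶠ t in Filter.atTop, C₂ * R t ^ p * t ^ (-(1:ℝ)/2) ≤ 1/2 := by
  obtain ⟨Cb, hCb, t₁, ht₁, hratio⟩ := hR.ratio
  have hexp1 : (1:ℝ) < Real.exp 1 := by
    have h := Real.add_one_le_exp (1:ℝ); linarith
  have ht₁1 : (1:ℝ) < t₁ := hexp1.trans ht₁
  have ht₁0 : (0:ℝ) < t₁ := by linarith
  have hlog₁ : 1 < Real.log t₁ := by
    have := Real.log_lt_log (Real.exp_pos 1) ht₁
    rwa [Real.log_exp] at this
  have hdiffR : ∀ x : ℝ, 0 < x → DifferentiableAt ℝ R x := fun x hx =>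
    ((hR.contDiffOn.differentiableOn one_ne_zero) x (le_of_lt hx)).differentiableAt
      (Ici_mem_nhds hx)
  set g : ℝ → ℝ := fun t => Real.log (R t) - Cb * Real.log (Real.log t) with hg
  have hderivg : ∀ x ∈ Set.Ici t₁,
      HasDerivAt g (deriv R x / R x - Cb * (x⁻¹ / Real.log x)) x := by
    intro x hx
    have hx0 : 0 < x := lt_of_lt_of_le ht₁0 hx
    have hlogx : 1 < Real.log x := lt_of_lt_of_le hlog₁ (Real.log_le_log ht₁0 hx)
    have h1 : HasDerivAt R (deriv R x) x := (hdiffR x hx0).hasDerivAt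
    have h2 := h1.log (ne_of_gt (hR.pos x hx0))
    have h3 : HasDerivAt Real.log x⁻¹ x := Real.hasDerivAt_log (ne_of_gt hx0)
    have h4 := h3.log (by positivity : Real.log x ≠ 0)
    exact h2.sub (h4.const_mul Cb)
  have hg_anti : AntitoneOn g (Set.Ici t₁) := by
    apply antitoneOn_of_deriv_nonpos (convex_Ici t₁)
    · exact fun x hx => ((hderivg x hx).continuousAt).continuousWithinAt
    · intro x hx
      rw [interior_Ici] at hx
      exact ((hderivg x (Set.mem_Ici.2 (le_of_lt hx))).differentiableAt).differentiableWithinAt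
    · intro x hx
      rw [interior_Ici] at hx
      rw [(hderivg x (Set.mem_Ici.2 (le_of_lt hx))).deriv]
      have hx0 : 0 < x := lt_of_lt_of_le ht₁0 (le_of_lt hx)
      have hlogx : 1 < Real.log x := lt_of_lt_of_le hlog₁ (Real.log_le_log ht₁0 hx.le)
      have hr := hratio x hx.le
      have heq : Cb * (x⁻¹ / Real.log x) = Cb / (x * Real.log x) := by
        field_simp
      rw [heq]; linarith
  have hRle : ∀ t, t₁ ≤ t → R t ≤ R t₁ * Real.log t ^ Cb := by
    intro t ht
    have ht0 : 0 < t := lt_of_lt_of_le ht₁0 ht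
    have hlogt : 1 < Real.log t := lt_of_lt_of_le hlog₁ (Real.log_le_log ht₁0 ht)
    have hgle := hg_anti (Set.self_mem_Ici) (ht : t ∈ Set.Ici t₁) ht
    have hll₁ : 0 ≤ Real.log (Real.log t₁) := Real.log_nonneg hlog₁.le
    have key : Real.log (R t) ≤ Real.log (R t₁) + Cb * Real.log (Real.log t) := by
      simp only [hg] at hgle
      nlinarith [mul_nonneg hCb.le hll₁]
    calc R t = Real.exp (Real.log (R t)) := (Real.exp_log (hR.pos t ht0)).symm
      _ ≤ Real.exp (Real.log (R t₁) + Cb * Real.log (Real.log t)) := Real.exp_le_exp.2 key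
      _ = R t₁ * Real.log t ^ Cb := by
          rw [Real.exp_add, Real.exp_log (hR.pos t₁ ht₁0),
            Real.rpow_def_of_pos (by linarith : 0 < Real.log t), mul_comm Cb]
  set K := R t₁ with hK
  have hK0 : 0 < K := hR.pos t₁ ht₁0
  have hlo := (isLittleO_log_rpow_rpow_atTop (Cb * p)
      (by norm_num : (0:ℝ) < 1/2)).def
      (show (0:ℝ) < (1/2) / (C₂ * K ^ p) by positivity)
  filter_upwards [hlo, Filter.eventually_ge_atTop t₁] with t hlot ht
  have ht0 : 0 < t := lt_of_lt_of_le ht₁0 ht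
  have ht1 : 1 < t := lt_of_lt_of_le ht₁1 ht
  have hlogt : 1 < Real.log t := lt_of_lt_of_le hlog₁ (Real.log_le_log ht₁0 ht)
  have hlogt0 : 0 < Real.log t := by linarith
  have h4 : Real.log t ^ (Cb * p) ≤ (1/2) / (C₂ * K ^ p) * t ^ ((1:ℝ)/2) := by
    have := hlot
    rwa [Real.norm_eq_abs, Real.norm_eq_abs, abs_of_nonneg (Real.rpow_nonneg hlogt0.le _),
      abs_of_nonneg (Real.rpow_nonneg ht0.le _)] at this
  have h2 : R t ^ p ≤ K ^ p * Real.log t ^ (Cb * p) := by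
    have := Real.rpow_le_rpow (hR.pos t ht0).le (hRle t ht) hp.le
    rwa [Real.mul_rpow hK0.le (Real.rpow_nonneg hlogt0.le _),
      ← Real.rpow_mul hlogt0.le] at this
  have htt : t ^ ((1:ℝ)/2) * t ^ (-(1:ℝ)/2) = 1 := by
    rw [← Real.rpow_add ht0]; norm_num
  have hKp : (0:ℝ) < C₂ * K ^ p := by positivity
  calc C₂ * R t ^ p * t ^ (-(1:ℝ)/2)
      ≤ C₂ * (K ^ p * ((1/2) / (C₂ * K ^ p) * t ^ ((1:ℝ)/2))) * t ^ (-(1:ℝ)/2) := by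
        apply mul_le_mul_of_nonneg_right _ (Real.rpow_nonneg ht0.le _)
        apply mul_le_mul_of_nonneg_left _ hC₂.le
        exact h2.trans (mul_le_mul_of_nonneg_left h4 (Real.rpow_nonneg hK0.le _))
    _ = (1/2) * (t ^ ((1:ℝ)/2) * t ^ (-(1:ℝ)/2)) := by
        field_simp
    _ = 1/2 := by rw [htt, mul_one]

set_option maxHeartbeats 1000000 in
/-- positivity of the glued approximate solution
`u = λ⁻² U(x/λ) η(x/√t) + θ + λ⁻² φ(x/λ, t) η(x/(λR)) + ψ`
in the inner region `|x| < λ(t)^{1/2} t^{1/4}`. -/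
theorem positivity_in_inner_region (R : ℝ → ℝ) (hR : RCond R)
    (a a₁ : ℝ) (ha₁ : 0 < a₁) (ha₁a : a₁ < a) (ha : a < 1)
    (η : E6 → ℝ) (hηsmooth : ContDiff ℝ (⊤ : ℕ∞) η)
    (hη1 : ∀ x : E6, ‖x‖ ≤ 1 → η x = 1)
    (hη0 : ∀ x : E6, 2 ≤ ‖x‖ → η x = 0)
    (hη01 : ∀ x : E6, 0 ≤ η x ∧ η x ≤ 1)
    (c C₁ C₂ C₃ : ℝ) (hc : 1 ≤ c) (hC₁ : 0 < C₁) (hC₂ : 0 < C₂) (hC₃ : 0 < C₃) :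
    ∃ A₀ > (0:ℝ), ∃ t₀ > (1:ℝ), ∀ A : ℝ, A ≠ 0 → |A| ≤ A₀ → ∀ τ > t₀,
      ∀ lam : ℝ → ℝ,
        (∀ t ∈ Set.Icc t₀ τ, c⁻¹ * t ^ (5 * A / 4) ≤ lam t ∧ lam t ≤ c * t ^ (5 * A / 4)) →
      ∀ θ : E6 → ℝ → ℝ,
        (∀ x : E6, ∀ t ∈ Set.Icc t₀ τ, |θ x t| ≤ C₁ * |A| * t⁻¹) →
      ∀ φ : E6 → ℝ → ℝ,
        (∀ y : E6, ∀ t ∈ Set.Icc t₀ τ, ‖y‖ ≤ 2 * R t →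
          |φ y t| ≤ C₂ * t ^ (-1 + 5 * A / 2) * R t ^ (7 - a) * (1 + ‖y‖ ^ 2) ^ (-(7:ℝ) / 2)) →
      ∀ ψ : E6 → ℝ → ℝ,
        (∀ x : E6, ∀ t ∈ Set.Icc t₀ τ, |ψ x t| ≤ C₃ * |A| * t⁻¹ * R t ^ (-a₁)) →
      ∀ t ∈ Set.Icc t₀ τ, ∀ x : E6, ‖x‖ < lam t ^ ((1:ℝ) / 2) * t ^ ((1:ℝ) / 4) →
        0 < (lam t ^ 2)⁻¹ * Ubub ((lam t)⁻¹ • x) * η ((Real.sqrt t)⁻¹ • x)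
            + θ x t
            + (lam t ^ 2)⁻¹ * φ ((lam t)⁻¹ • x) t * η ((lam t * R t)⁻¹ • x)
            + ψ x t := by
  have h7a : (0:ℝ) < 7 - a := by linarith
  obtain ⟨T₁, hT₁⟩ := Filter.eventually_atTop.1 (hR.tendsto_atTop.eventually_ge_atTop 1)
  obtain ⟨T₂, hT₂⟩ := Filter.eventually_atTop.1 (R_poly_small' R hR C₂ (7 - a) hC₂ h7a)
  refine ⟨min (1/5) (min (1/(16*C₁)) (1/(16*C₃))), by positivity,
    max (max T₁ T₂) (max (c^4) 2), ?_, ?_⟩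
  · calc (1:ℝ) < 2 := one_lt_two
      _ ≤ max (c^4) 2 := le_max_right _ _
      _ ≤ _ := le_max_right _ _
  intro A hA hAA₀ τ hτ lam hlam θ hθ φ hφ ψ hψ t ht x hx
  set t₀ := max (max T₁ T₂) (max (c^4) 2) with ht₀def
  have hA5 : |A| ≤ 1/5 := hAA₀.trans (min_le_left _ _)
  have hA1 : |A| ≤ 1/(16*C₁) := hAA₀.trans ((min_le_right _ _).trans (min_le_left _ _))
  have hA3 : |A| ≤ 1/(16*C₃) := hAA₀.trans ((min_le_right _ _).trans (min_le_right _ _))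
  have ht2 : (2:ℝ) ≤ t := le_trans ((le_max_right _ _).trans (le_max_right _ _)) ht.1
  have hc4 : c^4 ≤ t := le_trans ((le_max_left _ _).trans (le_max_right _ _)) ht.1
  have hT₁t : T₁ ≤ t := le_trans ((le_max_left _ _).trans (le_max_left _ _)) ht.1
  have hT₂t : T₂ ≤ t := le_trans ((le_max_right _ _).trans (le_max_left _ _)) ht.1
  have ht1 : (1:ℝ) < t := by linarith
  have ht0 : (0:ℝ) < t := by linarith
  have hRt1 : (1:ℝ) ≤ R t := hT₁ t hT₁t
  have hRt0 : (0:ℝ) < R t := by linarith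
  have hpolyt : C₂ * R t ^ (7 - a) * t ^ (-(1:ℝ)/2) ≤ 1/2 := hT₂ t hT₂t
  obtain ⟨hlam₁, hlam₂⟩ := hlam t ht
  set L := lam t with hLdef
  have hL0 : (0:ℝ) < L := lt_of_lt_of_le (by positivity) hlam₁
  -- L ≤ t ^ (1/2)
  have hct : c ≤ t ^ ((1:ℝ)/4) := by
    apply le_of_pow_le_pow_left₀ (by norm_num : (4:ℕ) ≠ 0) (by positivity)
    calc c ^ (4:ℕ) ≤ t := hc4
      _ = (t ^ ((1:ℝ)/4)) ^ (4:ℕ) := by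
        rw [← Real.rpow_natCast (t ^ ((1:ℝ)/4)) 4, ← Real.rpow_mul ht0.le]
        norm_num
  have hquarter : t ^ ((1:ℝ)/4) * t ^ ((1:ℝ)/4) = t ^ ((1:ℝ)/2) := by
    rw [← Real.rpow_add ht0]; norm_num
  have hAle : 5 * A / 4 ≤ 1/4 := by
    have : A ≤ |A| := le_abs_self A
    linarith
  have hLt : L ≤ t ^ ((1:ℝ)/2) := by
    calc L ≤ c * t ^ (5 * A / 4) := hlam₂
      _ ≤ c * t ^ ((1:ℝ)/4) := by
        exact mul_le_mul_of_nonneg_left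
          (Real.rpow_le_rpow_of_exponent_le ht1.le hAle) (by positivity)
      _ ≤ t ^ ((1:ℝ)/4) * t ^ ((1:ℝ)/4) :=
          mul_le_mul_of_nonneg_right hct (by positivity)
      _ = t ^ ((1:ℝ)/2) := hquarter
  -- the cutoff η(x/√t) equals 1
  have hxt : ‖x‖ < t ^ ((1:ℝ)/2) := by
    calc ‖x‖ < L ^ ((1:ℝ)/2) * t ^ ((1:ℝ)/4) := hx
      _ ≤ (t ^ ((1:ℝ)/2)) ^ ((1:ℝ)/2) * t ^ ((1:ℝ)/4) :=
          mul_le_mul_of_nonneg_right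
            (Real.rpow_le_rpow hL0.le hLt (by norm_num)) (by positivity)
      _ = t ^ ((1:ℝ)/4) * t ^ ((1:ℝ)/4) := by
          rw [← Real.rpow_mul ht0.le]; norm_num
      _ = t ^ ((1:ℝ)/2) := hquarter
  have hsqrt : Real.sqrt t = t ^ ((1:ℝ)/2) := Real.sqrt_eq_rpow t
  have hsqrt0 : 0 < Real.sqrt t := Real.sqrt_pos.2 ht0
  have hη₁ : η ((Real.sqrt t)⁻¹ • x) = 1 := by
    apply hη1
    rw [norm_smul, Real.norm_eq_abs, abs_inv, abs_of_pos hsqrt0]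
    rw [inv_mul_le_iff₀ hsqrt0, mul_one, hsqrt]
    exact hxt.le
  set y : E6 := L⁻¹ • x with hy
  have hyn : ‖y‖ = ‖x‖ / L := by
    rw [hy, norm_smul, Real.norm_eq_abs, abs_inv, abs_of_pos hL0]
    ring
  have hyn0 : 0 ≤ ‖y‖ ^ 2 := sq_nonneg _
  -- key: L * ‖y‖² < t^{1/2}
  have hx2 : ‖x‖ ^ 2 < L * t ^ ((1:ℝ)/2) := by
    calc ‖x‖ ^ 2 < (L ^ ((1:ℝ)/2) * t ^ ((1:ℝ)/4)) ^ 2 :=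
        pow_lt_pow_left₀ hx (norm_nonneg x) (by norm_num)
      _ = L * t ^ ((1:ℝ)/2) := by
        rw [mul_pow, ← Real.rpow_natCast (L ^ ((1:ℝ)/2)) 2, ← Real.rpow_mul hL0.le,
          ← Real.rpow_natCast (t ^ ((1:ℝ)/4)) 2, ← Real.rpow_mul ht0.le]
        norm_num
  have hLy : L * ‖y‖ ^ 2 < t ^ ((1:ℝ)/2) := by
    have heq : L * ‖y‖ ^ 2 = ‖x‖ ^ 2 / L := by
      rw [hyn, div_pow]; field_simp
    rw [heq, div_lt_iff₀ hL0]
    calc ‖x‖ ^ 2 < L * t ^ ((1:ℝ)/2) := hx2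
      _ = t ^ ((1:ℝ)/2) * L := by ring
  -- main term lower bound
  have hU0 : 0 < Ubub y := by
    have : (0:ℝ) < 1 + ‖y‖ ^ 2 / 24 := by positivity
    unfold Ubub; positivity
  have hmain : (4*t)⁻¹ < (L^2)⁻¹ * Ubub y := by
    have hbase : (0:ℝ) < 1 + ‖y‖ ^ 2 / 24 := by positivity
    have heq : (L^2)⁻¹ * Ubub y = ((L + L * ‖y‖ ^ 2 / 24) ^ 2)⁻¹ := by
      unfold Ubub
      rw [← mul_inv, ← mul_pow]
      congr 2
      ring
    rw [heq]
    apply inv_strictAnti₀ (by positivity)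
    have hts : (0:ℝ) < t ^ ((1:ℝ)/2) := by positivity
    have h1 : L + L * ‖y‖ ^ 2 / 24 < 2 * t ^ ((1:ℝ)/2) := by linarith [hLt, hLy]
    have h2 : (t ^ ((1:ℝ)/2)) ^ 2 = t := by
      rw [← Real.rpow_natCast (t ^ ((1:ℝ)/2)) 2, ← Real.rpow_mul ht0.le]
      norm_num
    have h3 : (L + L * ‖y‖ ^ 2 / 24) ^ 2 < (2 * t ^ ((1:ℝ)/2)) ^ 2 :=
      pow_lt_pow_left₀ h1 (by positivity) (by norm_num)
    rw [mul_pow, h2] at h3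
    calc (L + L * ‖y‖ ^ 2 / 24) ^ 2 < 2 ^ 2 * t := h3
      _ = 4 * t := by norm_num
  -- θ and ψ bounds
  have hθb : |θ x t| ≤ t⁻¹ / 16 := by
    have h1 : C₁ * |A| ≤ 1/16 := by
      calc C₁ * |A| ≤ C₁ * (1/(16*C₁)) := mul_le_mul_of_nonneg_left hA1 hC₁.le
        _ = 1/16 := by field_simp
    calc |θ x t| ≤ C₁ * |A| * t⁻¹ := hθ x t ht
      _ ≤ (1/16) * t⁻¹ := mul_le_mul_of_nonneg_right h1 (by positivity)
      _ = t⁻¹ / 16 := by ring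
  have hψb : |ψ x t| ≤ t⁻¹ / 16 := by
    have h1 : C₃ * |A| ≤ 1/16 := by
      calc C₃ * |A| ≤ C₃ * (1/(16*C₃)) := mul_le_mul_of_nonneg_left hA3 hC₃.le
        _ = 1/16 := by field_simp
    have hRa : R t ^ (-a₁) ≤ 1 :=
      Real.rpow_le_one_of_one_le_of_nonpos hRt1 (by linarith)
    calc |ψ x t| ≤ C₃ * |A| * t⁻¹ * R t ^ (-a₁) := hψ x t ht
      _ ≤ C₃ * |A| * t⁻¹ * 1 := by
        apply mul_le_mul_of_nonneg_left hRa (by positivity)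
      _ = C₃ * |A| * t⁻¹ := by ring
      _ ≤ (1/16) * t⁻¹ := mul_le_mul_of_nonneg_right h1 (by positivity)
      _ = t⁻¹ / 16 := by ring
  -- φ term bound
  have hφb : |(L^2)⁻¹ * φ y t * η ((L * R t)⁻¹ • x)| ≤ (1/2) * ((L^2)⁻¹ * Ubub y) := by
    by_cases h2R : 2 ≤ ‖(L * R t)⁻¹ • x‖
    · rw [hη0 _ h2R, mul_zero, abs_zero]
      positivity
    · push_neg at h2R
      have hLR0 : 0 < L * R t := by positivity
      have hy2R : ‖y‖ ≤ 2 * R t := by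
        rw [norm_smul, Real.norm_eq_abs, abs_inv, abs_of_pos hLR0,
          inv_mul_lt_iff₀ hLR0] at h2R
        rw [hyn, div_le_iff₀ hL0]
        calc ‖x‖ ≤ L * R t * 2 := h2R.le
          _ = 2 * R t * L := by ring
      have hφle := hφ y t ht hy2R
      -- C₂ * t^{-1+5A/2} * R^{7-a} ≤ 1/2
      have hexp : (-1 + 5 * A / 2 : ℝ) ≤ -(1:ℝ)/2 := by
        have : A ≤ |A| := le_abs_self A
        linarith
      have hkey : C₂ * t ^ (-1 + 5 * A / 2) * R t ^ (7 - a) ≤ 1/2 := by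
        calc C₂ * t ^ (-1 + 5 * A / 2) * R t ^ (7 - a)
            ≤ C₂ * t ^ (-(1:ℝ)/2) * R t ^ (7 - a) := by
              apply mul_le_mul_of_nonneg_right _ (Real.rpow_nonneg hRt0.le _)
              exact mul_le_mul_of_nonneg_left
                (Real.rpow_le_rpow_of_exponent_le ht1.le hexp) hC₂.le
          _ = C₂ * R t ^ (7 - a) * t ^ (-(1:ℝ)/2) := by ring
          _ ≤ 1/2 := hpolyt
      have hpow : ((1:ℝ) + ‖y‖ ^ 2) ^ (-(7:ℝ)/2) ≤ Ubub y := by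
        have h1y : (1:ℝ) ≤ 1 + ‖y‖ ^ 2 := by linarith
        calc ((1:ℝ) + ‖y‖ ^ 2) ^ (-(7:ℝ)/2) ≤ (1 + ‖y‖ ^ 2) ^ (-(2:ℝ)) :=
            Real.rpow_le_rpow_of_exponent_le h1y (by norm_num)
          _ = ((1 + ‖y‖ ^ 2) ^ (2:ℕ))⁻¹ := by
            rw [Real.rpow_neg (by linarith)]
            congr 1
            rw [← Real.rpow_natCast (1 + ‖y‖ ^ 2) 2]
            norm_num
          _ ≤ ((1 + ‖y‖ ^ 2 / 24) ^ (2:ℕ))⁻¹ := by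
            apply inv_anti₀ (by positivity)
            apply pow_le_pow_left₀ (by positivity)
            linarith
          _ = Ubub y := rfl
      have hφU : |φ y t| ≤ (1/2) * Ubub y := by
        calc |φ y t| ≤ C₂ * t ^ (-1 + 5 * A / 2) * R t ^ (7 - a) *
              (1 + ‖y‖ ^ 2) ^ (-(7:ℝ)/2) := hφle
          _ ≤ (1/2) * Ubub y := by
            apply mul_le_mul hkey hpow (Real.rpow_nonneg (by positivity) _) (by norm_num)
      have hηle : |η ((L * R t)⁻¹ • x)| ≤ 1 := by
        rw [abs_of_nonneg (hη01 _).1]; exact (hη01 _).2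
      calc |(L^2)⁻¹ * φ y t * η ((L * R t)⁻¹ • x)|
          = (L^2)⁻¹ * |φ y t| * |η ((L * R t)⁻¹ • x)| := by
            rw [abs_mul, abs_mul, abs_of_pos (by positivity : (0:ℝ) < (L^2)⁻¹)]
        _ ≤ (L^2)⁻¹ * |φ y t| * 1 :=
            mul_le_mul_of_nonneg_left hηle (by positivity)
        _ = (L^2)⁻¹ * |φ y t| := by ring
        _ ≤ (L^2)⁻¹ * ((1/2) * Ubub y) :=
            mul_le_mul_of_nonneg_left hφU (by positivity)
        _ = (1/2) * ((L^2)⁻¹ * Ubub y) := by ring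
  -- conclude
  rw [hη₁, mul_one]
  have h1 : -((1/2) * ((L^2)⁻¹ * Ubub y)) ≤ (L^2)⁻¹ * φ y t * η ((L * R t)⁻¹ • x) :=
    neg_le_of_abs_le hφb
  have h2 : -(t⁻¹/16) ≤ θ x t := neg_le_of_abs_le hθb
  have h3 : -(t⁻¹/16) ≤ ψ x t := neg_le_of_abs_le hψb
  have h4t : (4*t)⁻¹ = t⁻¹/4 := by rw [mul_inv]; ring
  have hM := hmain
  rw [h4t] at hM
  linarith
end
end

section
/- Let c₁, c₂ > 0 and let Θ̃ : [0,∞) → ℝ be a continuous function satisfying c₁ (1+ρ)⁻² ≤ Θ̃(ρ) ≤ c₂ (1+ρ)⁻² for all ρ ≥ 0. Define D(r) = ∫₀ʳ (e^{−ρ²/4} / (ρ⁵ Θ̃(ρ)²)) [ ∫₀^ρ s⁵ e^{s²/4} Θ̃(s)³ ds ] dρ for r ≥ 0. Then sup_{r ≥ 0} D(r) < ∞. -/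
/-!
With `w(s) = s⁵ e^{s²/4} (1+s)⁻⁶`, the upper bound on `Θ` gives
`∫₀^ρ s⁵ e^{s²/4} Θ(s)³ ds ≤ c₂³ ∫₀^ρ w`, and `w ≤ w'` on `[0,∞)` gives
`∫₀^ρ w ≤ w(ρ)`.
Together with the lower bound on `Θ`, the outer integrand is therefore at most
`(c₂³/c₁²) (1+ρ)⁻²`, whose integral over `[0,∞)` is `c₂³/c₁²`.
-/

open Real Set intervalIntegral MeasureTheory

noncomputable def innerMajorant (s : ℝ) : ℝ := s ^ 5 * exp (s ^ 2 / 4) / (1 + s) ^ 6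

lemma hasDerivAt_innerMajorant {x : ℝ} (hx : 1 + x ≠ 0) :
    HasDerivAt innerMajorant
      (x ^ 4 * (x ^ 3 + x ^ 2 - 2 * x + 10) * exp (x ^ 2 / 4) / (2 * (1 + x) ^ 7)) x := by
  have hexp := ((hasDerivAt_pow 2 x).div_const 4).exp
  have hden := ((hasDerivAt_id' x).const_add 1).fun_pow 6
  refine (((hasDerivAt_pow 5 x).fun_mul hexp).fun_div hden (pow_ne_zero 6 hx)).congr_deriv ?_
  field_simp
  ring

lemma innerMajorant_le_deriv {x : ℝ} (hx : 0 ≤ x) :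
    innerMajorant x ≤ deriv innerMajorant x := by
  have hx1 : 0 < 1 + x := by linarith
  have hcubic : 0 ≤ x ^ 3 - x ^ 2 - 4 * x + 10 := by
    nlinarith [mul_nonneg hx (sq_nonneg (x - 2)), sq_nonneg (x - 4 / 3)]
  rw [(hasDerivAt_innerMajorant hx1.ne').deriv, ← sub_nonneg]
  have hdiff : x ^ 4 * (x ^ 3 + x ^ 2 - 2 * x + 10) * exp (x ^ 2 / 4) / (2 * (1 + x) ^ 7)
      - innerMajorant x
      = x ^ 4 * (x ^ 3 - x ^ 2 - 4 * x + 10) * exp (x ^ 2 / 4) / (2 * (1 + x) ^ 7) := by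
    rw [innerMajorant]
    field_simp
    ring
  rw [hdiff]
  positivity

lemma integral_le_innerMajorant {Θ : ℝ → ℝ} {c₂ ρ : ℝ} (hc₂ : 0 ≤ c₂) (hρ : 0 ≤ ρ)
    (hcont : ContinuousOn Θ (Icc 0 ρ)) (hpos : ∀ s ∈ Icc 0 ρ, 0 ≤ Θ s)
    (hhigh : ∀ s ∈ Icc 0 ρ, Θ s ≤ c₂ * ((1 + s) ^ 2)⁻¹) :
    ∫ s in 0..ρ, s ^ 5 * exp (s ^ 2 / 4) * Θ s ^ 3 ≤ c₂ ^ 3 * innerMajorant ρ := by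
  have hderiv : ∀ x ∈ Icc 0 ρ,
      HasDerivAt (fun x => c₂ ^ 3 * innerMajorant x) (c₂ ^ 3 * deriv innerMajorant x) x :=
    fun x hx => ((hasDerivAt_innerMajorant (by linarith [hx.1])).differentiableAt
      |>.hasDerivAt).const_mul _
  have hint : IntegrableOn (fun s => s ^ 5 * exp (s ^ 2 / 4) * Θ s ^ 3) (Icc 0 ρ) :=
    (ContinuousOn.mul (by fun_prop) (hcont.pow 3)).integrableOn_compact isCompact_Icc
  have hle : ∀ s ∈ Ioo 0 ρ,
      s ^ 5 * exp (s ^ 2 / 4) * Θ s ^ 3 ≤ c₂ ^ 3 * deriv innerMajorant s := by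
    intro s hs
    have hs' := Ioo_subset_Icc_self hs
    calc s ^ 5 * exp (s ^ 2 / 4) * Θ s ^ 3
        ≤ s ^ 5 * exp (s ^ 2 / 4) * (c₂ * ((1 + s) ^ 2)⁻¹) ^ 3 := by
          have := hs.1.le
          gcongr
          exacts [hpos s hs', hhigh s hs']
      _ = c₂ ^ 3 * innerMajorant s := by rw [innerMajorant]; field_simp
      _ ≤ c₂ ^ 3 * deriv innerMajorant s := by gcongr; exact innerMajorant_le_deriv hs.1.le
  have := integral_le_sub_of_hasDeriv_right_of_le hρ
    (fun x hx => (hderiv x hx).continuousAt.continuousWithinAt)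
    (fun x hx => (hderiv x (Ioo_subset_Icc_self hx)).hasDerivWithinAt) hint hle
  simpa [innerMajorant] using this

lemma exp_div_mul_integral_le_inv_one_add_sq {Θ : ℝ → ℝ} {c₁ c₂ ρ : ℝ}
    (hc₁ : 0 < c₁) (hc₂ : 0 ≤ c₂) (hρ : 0 < ρ)
    (hcont : ContinuousOn Θ (Icc 0 ρ))
    (hlow : ∀ s ∈ Icc 0 ρ, c₁ * ((1 + s) ^ 2)⁻¹ ≤ Θ s)
    (hhigh : ∀ s ∈ Icc 0 ρ, Θ s ≤ c₂ * ((1 + s) ^ 2)⁻¹) :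
    exp (-ρ ^ 2 / 4) / (ρ ^ 5 * Θ ρ ^ 2) * ∫ s in 0..ρ, s ^ 5 * exp (s ^ 2 / 4) * Θ s ^ 3
      ≤ c₂ ^ 3 / c₁ ^ 2 * ((1 + ρ) ^ 2)⁻¹ := by
  have hpos : ∀ s ∈ Icc 0 ρ, 0 ≤ Θ s := fun s hs =>
    le_trans (by have := hs.1; positivity) (hlow s hs)
  have hρmem : ρ ∈ Icc 0 ρ := ⟨hρ.le, le_rfl⟩
  have hinner := integral_le_innerMajorant hc₂ hρ.le hcont hpos hhigh
  have hinner_nonneg : 0 ≤ ∫ s in 0..ρ, s ^ 5 * exp (s ^ 2 / 4) * Θ s ^ 3 :=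
    integral_nonneg hρ.le fun s hs => by have := hs.1; have := hpos s hs; positivity
  calc exp (-ρ ^ 2 / 4) / (ρ ^ 5 * Θ ρ ^ 2) * ∫ s in 0..ρ, s ^ 5 * exp (s ^ 2 / 4) * Θ s ^ 3
      ≤ exp (-ρ ^ 2 / 4) / (ρ ^ 5 * (c₁ * ((1 + ρ) ^ 2)⁻¹) ^ 2)
          * (c₂ ^ 3 * innerMajorant ρ) := by
        gcongr
        exact hlow ρ hρmem
    _ = c₂ ^ 3 / c₁ ^ 2 * ((1 + ρ) ^ 2)⁻¹ := by
        rw [innerMajorant, neg_div, exp_neg]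
        field_simp

lemma integral_le_of_le_inv_one_add_sq {f : ℝ → ℝ} {K r : ℝ} (hK : 0 ≤ K) (hr : 0 ≤ r)
    (hf : ∀ ρ ∈ Ioo 0 r, f ρ ≤ K * ((1 + ρ) ^ 2)⁻¹) : ∫ ρ in 0..r, f ρ ≤ K := by
  by_cases hint : IntervalIntegrable f volume 0 r
  · have hderiv : ∀ x ∈ Icc 0 r,
        HasDerivAt (fun x => -K * (1 + x)⁻¹) (K * ((1 + x) ^ 2)⁻¹) x := fun x hx =>
      ((((hasDerivAt_id' x).const_add 1).fun_inv (by linarith [hx.1])).const_mul (-K)).congr_deriv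
        (by ring)
    calc ∫ ρ in 0..r, f ρ ≤ -K * (1 + r)⁻¹ - -K * (1 + 0)⁻¹ :=
          integral_le_sub_of_hasDeriv_right_of_le hr
            (fun x hx => (hderiv x hx).continuousAt.continuousWithinAt)
            (fun x hx => (hderiv x (Ioo_subset_Icc_self hx)).hasDerivWithinAt)
            ((intervalIntegrable_iff_integrableOn_Icc_of_le hr).mp hint) hf
      _ ≤ K := by
          have : 0 ≤ K * (1 + r)⁻¹ := by positivity
          simp only [add_zero, inv_one]
          linarith
  · rw [integral_undef hint]
    exact hK

/-- if `Θ̃` is continuous on `[0,∞)` with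
`c₁(1+ρ)⁻² ≤ Θ̃(ρ) ≤ c₂(1+ρ)⁻²`, then
`D(r) = ∫₀ʳ (e^{−ρ²/4}/(ρ⁵ Θ̃(ρ)²)) [∫₀^ρ s⁵ e^{s²/4} Θ̃(s)³ ds] dρ`
is bounded uniformly in `r ≥ 0`. -/
theorem D_uniformly_bounded (c₁ c₂ : ℝ) (hc₁ : 0 < c₁) (hc₂ : 0 < c₂)
    (Θ : ℝ → ℝ) (hcont : ContinuousOn Θ (Set.Ici 0))
    (hlow : ∀ ρ ≥ (0:ℝ), c₁ * ((1 + ρ) ^ 2)⁻¹ ≤ Θ ρ)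
    (hhigh : ∀ ρ ≥ (0:ℝ), Θ ρ ≤ c₂ * ((1 + ρ) ^ 2)⁻¹) :
    ∃ M : ℝ, ∀ r ≥ (0:ℝ),
      (∫ ρ in (0:ℝ)..r, Real.exp (-ρ ^ 2 / 4) / (ρ ^ 5 * Θ ρ ^ 2) *
        ∫ s in (0:ℝ)..ρ, s ^ 5 * Real.exp (s ^ 2 / 4) * Θ s ^ 3) ≤ M :=
  ⟨c₂ ^ 3 / c₁ ^ 2, fun r hr => integral_le_of_le_inv_one_add_sq (by positivity) hr
    fun ρ hρ => exp_div_mul_integral_le_inv_one_add_sq hc₁ hc₂.le hρ.1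
      (hcont.mono Icc_subset_Ici_self) (fun s hs => hlow s hs.1) (fun s hs => hhigh s hs.1)⟩
end
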